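/- arXiv:2504.13342 — 9 statements merged into one kernel-verified Lean document; each statement's English description precedes it below -/
import Mathlib

section
/- Let C = Z_q^n, let n ≥ t, and suppose at most t erasures may occur in each channel, with all N output words distinct. If V_2(n-a-1, t-a-1) + 1 ≤ N ≤ V_2(n-a, t-a) for some integer a ∈ [0, t-1], then the maximum list size is L = q^a. In particular, L = 1 when N ≥ V_2(n-1, t-1) + 1. -/
/-!
A word `c` lies in the list `T(Y)` exactly when it agrees with `x` outside the set `S` of
positions erased in every output, so `|T(Y)| = q ^ |S|`. If `|S| > a`, deleting `a + 1` common
erasures from each erasure pattern injects `Y` into the sets of at most `t - a - 1` positions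
among `n - a - 1`, forcing `N ≤ V_2(n-a-1, t-a-1)`. Conversely, erasing a fixed `a`-set together
with at most `t - a` further positions gives `V_2(n-a, t-a)` distinct outputs, any `N` of which
have at least `a` common erasures.
-/

open Finset

/-- `V_2(m,r) = Σ_{i=0}^{r} C(m,i)`. -/
def V2 (m r : ℕ) : ℕ := ∑ i ∈ Finset.range (r + 1), m.choose i

/-- `y` (a word over `Z_q ∪ {*}`) is obtainable from `x ∈ (Z_q)^n` by at most `t` erasures. -/
def ErasureOutput (n q t : ℕ) (x : Fin n → Fin q) (y : Fin n → Option (Fin q)) : Prop :=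
  (∀ i, y i = some (x i) ∨ y i = none) ∧
    (Finset.univ.filter (fun i => y i = none)).card ≤ t

instance (n q t : ℕ) (x : Fin n → Fin q) (y : Fin n → Option (Fin q)) :
    Decidable (ErasureOutput n q t x y) := by
  unfold ErasureOutput; infer_instance

variable {ι α : Type*}

def IsErasureOf (x : ι → α) (y : ι → Option α) : Prop :=
  ∀ i, y i = some (x i) ∨ y i = none

def eraseOn [DecidableEq ι] (x : ι → α) (s : Finset ι) : ι → Option α :=
  fun i => if i ∈ s then none else some (x i)

theorem isErasureOf_eraseOn [DecidableEq ι] (x : ι → α) (s : Finset ι) :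
    IsErasureOf x (eraseOn x s) := fun i => by
  by_cases hi : i ∈ s <;> simp [eraseOn, hi]

theorem card_filter_powerset_card_le (s : Finset ι) (r : ℕ) :
    #{e ∈ s.powerset | #e ≤ r} = V2 #s r := by
  rw [card_eq_sum_card_fiberwise (f := card) (t := range (r + 1))
    fun e he => mem_range.mpr (Nat.lt_succ_of_le (mem_filter.mp he).2)]
  refine sum_congr rfl fun i hi => ?_
  rw [← card_powersetCard]
  congr 1
  ext e
  have hir := mem_range.mp hi
  simp only [mem_filter, mem_powerset, mem_powersetCard]
  exact ⟨fun ⟨⟨hes, _⟩, hei⟩ => ⟨hes, hei⟩, fun ⟨hes, hei⟩ => ⟨⟨hes, by omega⟩, hei⟩⟩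

section Erasures

variable [Fintype ι]

def erasedSet (y : ι → Option α) : Finset ι := {i | y i = none}

def commonErasedSet (Y : Finset (ι → Option α)) : Finset ι := {i | ∀ y ∈ Y, y i = none}

theorem IsErasureOf.eq_of_erasedSet_eq {x : ι → α} {y₁ y₂ : ι → Option α}
    (h₁ : IsErasureOf x y₁) (h₂ : IsErasureOf x y₂) (h : erasedSet y₁ = erasedSet y₂) :
    y₁ = y₂ := by
  funext i
  have hi : y₁ i = none ↔ y₂ i = none := by simpa [erasedSet] using congr(i ∈ $h)
  rcases h₁ i with h₁ | h₁ <;> rcases h₂ i with h₂ | h₂ <;> simp_all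

theorem erasedSet_eraseOn [DecidableEq ι] (x : ι → α) (s : Finset ι) :
    erasedSet (eraseOn x s) = s := by
  ext i
  by_cases hi : i ∈ s <;> simp [erasedSet, eraseOn, hi]

theorem forall_isErasureOf_iff {x c : ι → α} {Y : Finset (ι → Option α)}
    (hY : ∀ y ∈ Y, IsErasureOf x y) :
    (∀ y ∈ Y, IsErasureOf c y) ↔ ∀ i ∉ commonErasedSet Y, c i = x i := by
  simp only [commonErasedSet, mem_filter, mem_univ, true_and, not_forall]
  constructor
  · rintro hc i ⟨y, hy, hyi⟩
    have hx := (hY y hy i).resolve_right hyi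
    rw [(hc y hy i).resolve_right hyi] at hx
    exact Option.some_injective _ hx
  · intro hc y hy i
    by_cases hi : ∀ y ∈ Y, y i = none
    · exact .inr (hi y hy)
    · rw [hc i (by simpa using hi)]
      exact hY y hy i

theorem card_filter_forall_notMem_eq_pow [DecidableEq ι] [Fintype α] [DecidableEq α] (x : ι → α)
    (s : Finset ι) : #{c : ι → α | ∀ i ∉ s, c i = x i} = Fintype.card α ^ #s := by
  have h : ({c : ι → α | ∀ i ∉ s, c i = x i} : Finset (ι → α)) =
      Fintype.piFinset fun i => if i ∈ s then univ else {x i} := by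
    ext c
    simp only [mem_filter, mem_univ, true_and, Fintype.mem_piFinset]
    refine forall_congr' fun i => ?_
    by_cases hi : i ∈ s <;> simp [hi]
  rw [h, Fintype.card_piFinset]
  simp [apply_ite card, prod_ite_mem]

variable [DecidableEq ι] {t : ℕ}

theorem card_le_V2_of_subset_commonErasedSet {x : ι → α} {Y : Finset (ι → Option α)}
    {s : Finset ι} (hY : ∀ y ∈ Y, IsErasureOf x y ∧ #(erasedSet y) ≤ t)
    (hs : s ⊆ commonErasedSet Y) : #Y ≤ V2 (Fintype.card ι - #s) (t - #s) := by
  have hsy : ∀ y ∈ Y, s ⊆ erasedSet y := fun y hy i hi => by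
    simpa [erasedSet] using (mem_filter.mp (hs hi)).2 y hy
  have hmaps : ∀ y ∈ Y, erasedSet y \ s ∈ {e ∈ sᶜ.powerset | #e ≤ t - #s} := fun y hy => by
    rw [mem_filter, mem_powerset, card_sdiff_of_subset (hsy y hy)]
    exact ⟨sdiff_subset_sdiff (subset_univ _) le_rfl, Nat.sub_le_sub_right (hY y hy).2 _⟩
  have hinj : Set.InjOn (fun y => erasedSet y \ s) Y := fun y₁ hy₁ y₂ hy₂ h =>
    (hY y₁ hy₁).1.eq_of_erasedSet_eq (hY y₂ hy₂).1 <| by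
      rw [← sdiff_union_of_subset (hsy y₁ hy₁), ← sdiff_union_of_subset (hsy y₂ hy₂)]
      exact congr($h ∪ s)
  simpa [card_filter_powerset_card_le, card_compl] using card_le_card_of_injOn _ hmaps hinj

theorem card_commonErasedSet_le {x : ι → α} {Y : Finset (ι → Option α)} {k : ℕ}
    (hY : ∀ y ∈ Y, IsErasureOf x y ∧ #(erasedSet y) ≤ t)
    (hN : V2 (Fintype.card ι - (k + 1)) (t - (k + 1)) < #Y) : #(commonErasedSet Y) ≤ k := by
  by_contra! hk
  obtain ⟨s, hs, hsk⟩ := exists_subset_card_eq hk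
  have hle := card_le_V2_of_subset_commonErasedSet hY hs
  rw [hsk] at hle
  exact hN.not_ge hle

theorem exists_card_eq_subset_commonErasedSet (x : ι → α) {s : Finset ι} {N : ℕ}
    (hst : #s ≤ t) (hN : N ≤ V2 (Fintype.card ι - #s) (t - #s)) :
    ∃ Y : Finset (ι → Option α), #Y = N ∧ (∀ y ∈ Y, IsErasureOf x y ∧ #(erasedSet y) ≤ t) ∧
      s ⊆ commonErasedSet Y := by
  classical
  set F := {e ∈ sᶜ.powerset | #e ≤ t - #s}
  have hdisj : ∀ e ∈ F, Disjoint s e := fun e he =>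
    disjoint_of_subset_right (mem_powerset.mp (mem_filter.mp he).1) disjoint_compl_right
  have hinj : Set.InjOn (fun e => eraseOn x (s ∪ e)) F := fun e₁ he₁ e₂ he₂ h => by
    have h' : s ∪ e₁ = s ∪ e₂ := by simpa [erasedSet_eraseOn] using congr(erasedSet $h)
    rw [← union_sdiff_cancel_left (hdisj e₁ he₁), h', union_sdiff_cancel_left (hdisj e₂ he₂)]
  have hF : #(F.image fun e => eraseOn x (s ∪ e)) = V2 (Fintype.card ι - #s) (t - #s) := by
    rw [card_image_of_injOn hinj, card_filter_powerset_card_le, card_compl]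
  obtain ⟨Y, hYF, hYN⟩ := exists_subset_card_eq (hF ▸ hN)
  refine ⟨Y, hYN, fun y hy => ?_, fun i hi => ?_⟩
  · obtain ⟨e, he, rfl⟩ := mem_image.mp (hYF hy)
    refine ⟨isErasureOf_eraseOn x _, ?_⟩
    rw [erasedSet_eraseOn, card_union_of_disjoint (hdisj e he)]
    have := (mem_filter.mp he).2
    omega
  · simp only [commonErasedSet, mem_filter, mem_univ, true_and]
    intro y hy
    obtain ⟨e, -, rfl⟩ := mem_image.mp (hYF hy)
    simp [eraseOn, hi]

end Erasures

theorem card_filter_erasureOutput {n q t : ℕ} {x : Fin n → Fin q}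
    {Y : Finset (Fin n → Option (Fin q))} (hY : ∀ y ∈ Y, ErasureOutput n q t x y) :
    #{c | ∀ y ∈ Y, ErasureOutput n q t c y} = q ^ #(commonErasedSet Y) := by
  calc #{c | ∀ y ∈ Y, ErasureOutput n q t c y}
      = #{c : Fin n → Fin q | ∀ i ∉ commonErasedSet Y, c i = x i} := by
        refine congr_arg card (filter_congr fun c _ => ?_)
        rw [← forall_isErasureOf_iff fun y hy => (hY y hy).1]
        exact forall₂_congr fun y hy => and_iff_left (hY y hy).2
    _ = q ^ #(commonErasedSet Y) := by
        convert card_filter_forall_notMem_eq_pow x (commonErasedSet Y)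
        exact (Fintype.card_fin q).symm

/-- For `C = (Z_q)^n`, at most `t` erasures per channel and `N` distinct output words with
`V_2(n-a-1,t-a-1) + 1 ≤ N ≤ V_2(n-a,t-a)` for some `a ∈ [0,t-1]`, the maximum list size is
exactly `q^a`. -/
theorem stmt3 (q n t a N : ℕ) (hq : 2 ≤ q) (htn : t ≤ n) (ha : a + 1 ≤ t)
    (hN1 : V2 (n - a - 1) (t - a - 1) + 1 ≤ N) (hN2 : N ≤ V2 (n - a) (t - a)) :
    (∀ (x : Fin n → Fin q) (Y : Finset (Fin n → Option (Fin q))),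
        Y.card = N → (∀ y ∈ Y, ErasureOutput n q t x y) →
        (univ.filter (fun c : Fin n → Fin q => ∀ y ∈ Y, ErasureOutput n q t c y)).card ≤ q ^ a)
    ∧ (∃ (x : Fin n → Fin q) (Y : Finset (Fin n → Option (Fin q))),
        Y.card = N ∧ (∀ y ∈ Y, ErasureOutput n q t x y) ∧
        (univ.filter (fun c : Fin n → Fin q => ∀ y ∈ Y, ErasureOutput n q t c y)).card = q ^ a) := by
  have hcommon : ∀ (x : Fin n → Fin q) (Y : Finset (Fin n → Option (Fin q))),
      #Y = N → (∀ y ∈ Y, ErasureOutput n q t x y) → #(commonErasedSet Y) ≤ a :=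
    fun x Y hYN hY => card_commonErasedSet_le hY <| by
      rw [Fintype.card_fin, hYN, ← Nat.sub_sub, ← Nat.sub_sub]
      omega
  refine ⟨fun x Y hYN hY => ?_, ?_⟩
  · rw [card_filter_erasureOutput hY]
    exact Nat.pow_le_pow_right (by omega) (hcommon x Y hYN hY)
  obtain ⟨A, -, hA⟩ := exists_subset_card_eq (s := (univ : Finset (Fin n))) (n := a)
    (by simp only [card_univ, Fintype.card_fin]; omega)
  let x : Fin n → Fin q := fun _ => ⟨0, by omega⟩
  obtain ⟨Y, hYN, hY, hAY⟩ := exists_card_eq_subset_commonErasedSet x (s := A) (t := t) (N := N)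
    (by omega) (by rwa [hA, Fintype.card_fin])
  refine ⟨x, Y, hYN, hY, ?_⟩
  rw [card_filter_erasureOutput hY,
    le_antisymm (hcommon x Y hYN hY) (hA ▸ card_le_card hAY)]
end

section
/- Monotonicity of intersections of Hamming balls: for any x1, x2, x3, x4 ∈ Z_q^n with d(x1,x2) ≤ d(x3,x4), we have |B_t(x1) ∩ B_t(x2)| ≥ |B_t(x3) ∩ B_t(x4)|, where B_t(x) is the Hamming ball of radius t centered at x. -/
/-!
The size of `B_t(x) ∩ B_t(z)` depends only on `d(x, z)`: two pairs at equal distance are related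
by an isometry of the Hamming space, namely a permutation of the coordinates followed by a
permutation of the alphabet in each coordinate. Monotonicity then reduces to a single move:
replacing `z i` by `x i` does not shrink `B_t(x) ∩ B_t(z)`, and repeating it brings `z` towards
`x` one unit of distance at a time.
-/

open Finset Function

section HammingBall

variable {ι : Type*} [Fintype ι] [DecidableEq ι] {β : ι → Type*} [∀ i, DecidableEq (β i)]

theorem hammingDist_update_right_add (x y : ∀ j, β j) (i : ι) (a : β i) :
    hammingDist x (update y i a) + (if x i ≠ y i then 1 else 0) =
      hammingDist x y + (if x i ≠ a then 1 else 0) := by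
  have hoff : ∑ j ∈ univ.erase i, (if x j ≠ update y i a j then 1 else 0) =
      ∑ j ∈ univ.erase i, (if x j ≠ y j then 1 else 0) :=
    sum_congr rfl fun j hj => by rw [update_of_ne (ne_of_mem_erase hj)]
  simp only [hammingDist, card_filter, ← add_sum_erase univ _ (mem_univ i), hoff, update_self]
  ring

theorem hammingDist_update_left_add (x y : ∀ j, β j) (i : ι) (a : β i) :
    hammingDist (update x i a) y + (if x i ≠ y i then 1 else 0) =
      hammingDist x y + (if a ≠ y i then 1 else 0) := by
  simpa only [hammingDist_comm _ y, ne_comm] using hammingDist_update_right_add y x i a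

variable [∀ i, Fintype (β i)]

def hammingBall (t : ℕ) (x : ∀ i, β i) : Finset (∀ i, β i) :=
  {y | hammingDist x y ≤ t}

@[simp]
theorem mem_hammingBall {t : ℕ} {x y : ∀ i, β i} :
    y ∈ hammingBall t x ↔ hammingDist x y ≤ t := by
  simp [hammingBall]

theorem card_inter_hammingBall_le_update (t : ℕ) (x z : ∀ j, β j) (i : ι) :
    #(hammingBall t x ∩ hammingBall t z) ≤
      #(hammingBall t x ∩ hammingBall t (update z i (x i))) := by
  set z' := update z i (x i)
  set A := hammingBall t x ∩ hammingBall t z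
  set A' := hammingBall t x ∩ hammingBall t z'
  have hz'i : z' i = x i := update_self i (x i) z
  have lost : ∀ y ∈ A \ A', y i = z i ∧ x i ≠ z i ∧ hammingDist x y ≤ t ∧
      hammingDist z y = t ∧ hammingDist z' y = t + 1 := by
    intro y hy
    simp only [A, A', mem_sdiff, mem_inter, mem_hammingBall] at hy
    have e : hammingDist z' y + _ = _ := hammingDist_update_left_add z y i (x i)
    split_ifs at e with hzy hxy hxy <;> try omega
    rw [not_not] at hzy
    exact ⟨hzy.symm, fun h => hxy (h.trans hzy), by omega, by omega, by omega⟩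
  -- Resetting the `i`-th coordinate to `x i` injects `A \ A'` into `A' \ A`.
  rw [← card_sdiff_le_card_sdiff_iff]
  refine card_le_card_of_injOn (fun y => update y i (x i)) (fun y hy => ?_) ?_
  · obtain ⟨hyz, hxz, hx, hz, hz'⟩ := lost y hy
    have ex : hammingDist x (update y i (x i)) + _ = _ := hammingDist_update_right_add x y i _
    have ez : hammingDist z (update y i (x i)) + _ = _ := hammingDist_update_right_add z y i _
    have ez' : hammingDist z' (update y i (x i)) + _ = _ := hammingDist_update_right_add z' y i _
    simp only [hyz, hz'i, ne_eq, not_true_eq_false, if_false] at ex ez ez'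
    rw [if_pos hxz] at ex ez'
    rw [if_pos hxz.symm] at ez
    simp only [A, A', coe_sdiff, coe_inter, Set.mem_sdiff, Set.mem_inter_iff, mem_coe,
      mem_hammingBall]
    omega
  · intro y₁ hy₁ y₂ hy₂ h
    calc y₁ = update (update y₁ i (x i)) i (z i) := by
          rw [update_idem, ← (lost y₁ hy₁).1, update_eq_self]
      _ = update (update y₂ i (x i)) i (z i) := congrArg (update · i (z i)) h
      _ = y₂ := by rw [update_idem, ← (lost y₂ hy₂).1, update_eq_self]

theorem exists_hammingDist_eq_card_inter_hammingBall_le (t : ℕ) (x z : ∀ j, β j) {d : ℕ}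
    (hd : d ≤ hammingDist x z) :
    ∃ w, hammingDist x w = d ∧ #(hammingBall t x ∩ hammingBall t z) ≤
      #(hammingBall t x ∩ hammingBall t w) := by
  obtain ⟨k, hk⟩ := Nat.exists_eq_add_of_le hd
  clear hd
  induction k generalizing z with
  | zero => exact ⟨z, by omega, le_rfl⟩
  | succ k ih =>
    obtain ⟨i, hi⟩ : ∃ i, x i ≠ z i := ne_iff.mp (hammingDist_ne_zero.mp (by omega))
    have e := hammingDist_update_right_add x z i (x i)
    rw [if_pos hi, if_neg (not_not.mpr rfl)] at e
    obtain ⟨w, hw, hle⟩ := ih (update z i (x i)) (by omega)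
    exact ⟨w, hw, (card_inter_hammingBall_le_update t x z i).trans hle⟩

theorem card_inter_hammingBall_le_of_isometry {κ : Type*} [Fintype κ] [DecidableEq κ]
    {γ : κ → Type*} [∀ k, DecidableEq (γ k)] [∀ k, Fintype (γ k)]
    (f : (∀ i, β i) → ∀ k, γ k) (hf : ∀ u v, hammingDist (f u) (f v) = hammingDist u v)
    (t : ℕ) (x z : ∀ i, β i) :
    #(hammingBall t x ∩ hammingBall t z) ≤ #(hammingBall t (f x) ∩ hammingBall t (f z)) :=
  card_le_card_of_injOn f (fun y hy => by simpa [hf] using hy)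
    fun u _ v _ h => hammingDist_eq_zero.mp ((hf u v).symm.trans (hammingDist_eq_zero.mpr h))

end HammingBall

section Isometry

variable {ι α : Type*} [Fintype ι] [DecidableEq α]

theorem hammingDist_comp_equiv {κ : Type*} [Fintype κ] (σ : κ ≃ ι) (x y : ι → α) :
    hammingDist (x ∘ σ) (y ∘ σ) = hammingDist x y := by
  simp only [hammingDist, card_filter]
  exact σ.sum_comp fun i => if x i ≠ y i then 1 else 0

theorem Equiv.Perm.exists_apply_eq_and_apply_eq {a b c d : α} (h : a = b ↔ c = d) :
    ∃ σ : Equiv.Perm α, σ a = c ∧ σ b = d := by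
  by_cases hab : a = b
  · subst hab
    exact ⟨Equiv.swap a c, Equiv.swap_apply_left a c, (h.mp rfl) ▸ Equiv.swap_apply_left a c⟩
  · have hcd : c ≠ d := mt h.mpr hab
    obtain ⟨σ, hσ⟩ := Equiv.Perm.exists_extending_pair ![a, b] ![c, d]
      (by intro i j; fin_cases i <;> fin_cases j <;> simp [hab, Ne.symm hab])
      (by intro i j; fin_cases i <;> fin_cases j <;> simp [hcd, Ne.symm hcd])
    exact ⟨σ, hσ 0, hσ 1⟩

theorem exists_perm_eq_iff_eq_of_hammingDist_eq {x₁ x₂ x₃ x₄ : ι → α}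
    (h : hammingDist x₁ x₂ = hammingDist x₃ x₄) :
    ∃ σ : Equiv.Perm ι, ∀ i, x₁ i = x₂ i ↔ x₃ (σ i) = x₄ (σ i) := by
  obtain ⟨σ, hσ⟩ := Equiv.Perm.exists_map_finset_eq _ _ h
  refine ⟨σ, fun i => not_iff_not.mp ?_⟩
  simpa [hσ] using (mem_map' σ.toEmbedding (a := i) (s := {j | x₁ j ≠ x₂ j})).symm

theorem exists_hammingDist_isometry {x₁ x₂ x₃ x₄ : ι → α}
    (h : hammingDist x₁ x₂ = hammingDist x₃ x₄) :
    ∃ f : (ι → α) → ι → α,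
      (∀ u v, hammingDist (f u) (f v) = hammingDist u v) ∧ f x₃ = x₁ ∧ f x₄ = x₂ := by
  obtain ⟨σ, hσ⟩ := exists_perm_eq_iff_eq_of_hammingDist_eq h
  choose g hg using fun i => Equiv.Perm.exists_apply_eq_and_apply_eq (hσ i).symm
  refine ⟨fun y i => g i (y (σ i)), fun u v => ?_, funext fun i => (hg i).1,
    funext fun i => (hg i).2⟩
  exact (hammingDist_comp (fun i => g i) (fun i => (g i).injective) (x := u ∘ σ)
    (y := v ∘ σ)).trans (hammingDist_comp_equiv σ u v)

variable [DecidableEq ι] [Fintype α]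

theorem card_inter_hammingBall_eq_of_hammingDist_eq (t : ℕ) {x₁ x₂ x₃ x₄ : ι → α}
    (h : hammingDist x₁ x₂ = hammingDist x₃ x₄) :
    #(hammingBall t x₃ ∩ hammingBall t x₄) =
      #(hammingBall t x₁ ∩ hammingBall t x₂) := by
  obtain ⟨f, hf, rfl, rfl⟩ := exists_hammingDist_isometry h
  obtain ⟨f', hf', hx₃, hx₄⟩ := exists_hammingDist_isometry h.symm
  refine le_antisymm (card_inter_hammingBall_le_of_isometry f hf t x₃ x₄) ?_
  simpa only [hx₃, hx₄] using card_inter_hammingBall_le_of_isometry f' hf' t (f x₃) (f x₄)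

end Isometry

/-- Monotonicity of intersections of Hamming balls: if `d(x1,x2) ≤ d(x3,x4)` then
`|B_t(x1) ∩ B_t(x2)| ≥ |B_t(x3) ∩ B_t(x4)|`. -/
theorem stmt5 (q n t : ℕ) (x1 x2 x3 x4 : Fin n → Fin q)
    (h : hammingDist x1 x2 ≤ hammingDist x3 x4) :
    (univ.filter (fun y : Fin n → Fin q => hammingDist x3 y ≤ t ∧ hammingDist x4 y ≤ t)).card ≤
    (univ.filter (fun y : Fin n → Fin q => hammingDist x1 y ≤ t ∧ hammingDist x2 y ≤ t)).card := by
  rw [filter_and, filter_and]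
  obtain ⟨w, hw, hle⟩ := exists_hammingDist_eq_card_inter_hammingBall_le t x3 x4 h
  exact hle.trans (card_inter_hammingBall_eq_of_hammingDist_eq t hw.symm).le
end

section
/- Monotonicity of intersections of erasure-substitution balls: for x1, x2, x3, x4 ∈ Z_q^n with d(x1,x2) ≤ d(x3,x4), we have |B^{e,s}_{t_e,t_s}(x1) ∩ B^{e,s}_{t_e,t_s}(x2)| ≥ |B^{e,s}_{t_e,t_s}(x3) ∩ B^{e,s}_{t_e,t_s}(x4)|. -/
open Finset

/-- `y` (a word over `Z_q ∪ {*}`, with `*` modelled by `none`) is obtainable from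
`x ∈ (Z_q)^n` by at most `te` erasures and at most `ts` substitutions. -/
def EraSubOutput (n q te ts : ℕ) (x : Fin n → Fin q) (y : Fin n → Option (Fin q)) : Prop :=
  (Finset.univ.filter (fun i => y i = none)).card ≤ te ∧
    (Finset.univ.filter (fun i => y i ≠ none ∧ y i ≠ some (x i))).card ≤ ts

instance (n q te ts : ℕ) (x : Fin n → Fin q) (y : Fin n → Option (Fin q)) :
    Decidable (EraSubOutput n q te ts x y) := by
  unfold EraSubOutput; infer_instance

/-!
The size of `B(x) ∩ B(x')` depends only on `d(x, x')`: permuting the coordinates and, in each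
coordinate, the alphabet preserves erasure and substitution counts, and such a relabelling carries
any pair of words at distance `d` to any other. It therefore suffices to see that moving `x'` one
step towards `x` (setting `x' j := x j` where they differ) does not shrink the intersection. A word
`y` that is lost lies in `B(x')` but not in the new ball, which forces `y j = x' j`; replacing
`y j` by `x j` gives a word that is gained, and this map is injective.
-/

open Function

section Counting

variable {ι : Type*} [Fintype ι] [DecidableEq ι]

theorem card_filter_add_ite_eq_of_forall_ne {p p' : ι → Prop} [DecidablePred p]
    [DecidablePred p'] {j : ι} (h : ∀ i ≠ j, p i ↔ p' i) :
    #{i | p i} + (if p' j then 1 else 0) = #{i | p' i} + (if p j then 1 else 0) := by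
  have hoff : ∑ i ∈ univ.erase j, (if p i then 1 else 0) =
      ∑ i ∈ univ.erase j, (if p' i then 1 else 0) :=
    sum_congr rfl fun i hi => if_congr (h i (ne_of_mem_erase hi)) rfl rfl
  rw [card_filter, card_filter, ← sum_erase_add _ _ (mem_univ j),
    ← sum_erase_add _ _ (mem_univ j), hoff]
  omega

theorem hammingDist_update_add_one {α : Type*} [DecidableEq α] {x x' : ι → α} {j : ι}
    (h : x j ≠ x' j) : hammingDist x (update x' j (x j)) + 1 = hammingDist x x' := by
  have := card_filter_add_ite_eq_of_forall_ne (p := fun i => x i ≠ update x' j (x j) i)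
    (p' := fun i => x i ≠ x' i) (j := j) fun i hi => by rw [update_of_ne hi]
  simpa [hammingDist, h] using this

end Counting

theorem exists_perm_apply_eq_and_apply_eq {α : Type*} [DecidableEq α] {a b c d : α}
    (h : a = b ↔ c = d) : ∃ g : Equiv.Perm α, g a = c ∧ g b = d := by
  by_cases hab : a = b
  · subst hab
    exact ⟨Equiv.swap a c, Equiv.swap_apply_left a c, by rw [Equiv.swap_apply_left, h.mp rfl]⟩
  · have hcd : c ≠ d := mt h.mpr hab
    obtain ⟨g, hga, hgb⟩ := MulAction.is_two_pretransitive_iff.mp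
      (Equiv.Perm.isMultiplyPretransitive α 2) hab hcd
    exact ⟨g, hga, hgb⟩

section Words

variable {ι α : Type*}

def relabel (π : Equiv.Perm ι) (g : ι → Equiv.Perm α) : Equiv.Perm (ι → Option α) where
  toFun y i := (y (π i)).map (g i)
  invFun z k := (z (π.symm k)).map (g (π.symm k)).symm
  left_inv y := by funext k; simp [Option.map_map]
  right_inv z := by funext i; simp [Option.map_map]

variable [Fintype ι]

def erasureCount (y : ι → Option α) : ℕ := #{i | y i = none}

theorem erasureCount_relabel (π : Equiv.Perm ι) (g : ι → Equiv.Perm α) (y : ι → Option α) :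
    erasureCount (relabel π g y) = erasureCount y :=
  card_equiv π fun i => by simp [relabel]

theorem erasureCount_update_some [DecidableEq ι] {y : ι → Option α} {j : ι} (hy : y j ≠ none)
    (b : α) : erasureCount (update y j (some b)) = erasureCount y := by
  have := card_filter_add_ite_eq_of_forall_ne (p := fun i => update y j (some b) i = none)
    (p' := fun i => y i = none) (j := j) fun i hi => by rw [update_of_ne hi]
  simpa [erasureCount, hy] using this

variable [DecidableEq α]

def substitutionCount (x : ι → α) (y : ι → Option α) : ℕ :=
  #{i | y i ≠ none ∧ y i ≠ some (x i)}

theorem substitutionCount_relabel (π : Equiv.Perm ι) (g : ι → Equiv.Perm α) (x : ι → α)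
    (y : ι → Option α) :
    substitutionCount (fun i => g i (x (π i))) (relabel π g y) = substitutionCount x y :=
  card_equiv π fun i => by simp [relabel]

section Update

variable [DecidableEq ι] {x : ι → α} {y : ι → Option α} {j : ι}

theorem substitutionCount_add_ite_eq {x' : ι → α} {y' : ι → Option α}
    (h : ∀ i ≠ j, x i = x' i ∧ y i = y' i) :
    substitutionCount x y + (if y' j ≠ none ∧ y' j ≠ some (x' j) then 1 else 0) =
      substitutionCount x' y' + (if y j ≠ none ∧ y j ≠ some (x j) then 1 else 0) :=
  card_filter_add_ite_eq_of_forall_ne (p := fun i => y i ≠ none ∧ y i ≠ some (x i))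
    (p' := fun i => y' i ≠ none ∧ y' i ≠ some (x' i)) fun i hi => by rw [(h i hi).1, (h i hi).2]

theorem substitutionCount_update_left_of_ne (hy : y j = some (x j)) {a : α} (ha : a ≠ x j) :
    substitutionCount (update x j a) y = substitutionCount x y + 1 := by
  have := substitutionCount_add_ite_eq (x' := update x j a) (y' := y) (j := j)
    fun i hi => ⟨(update_of_ne hi _ _).symm, rfl⟩
  simpa [hy, Ne.symm ha] using this.symm

theorem substitutionCount_update_left_le (hy : y j ≠ some (x j)) (a : α) :
    substitutionCount (update x j a) y ≤ substitutionCount x y := by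
  have := substitutionCount_add_ite_eq (x' := update x j a) (y' := y) (j := j)
    fun i hi => ⟨(update_of_ne hi _ _).symm, rfl⟩
  split_ifs at this <;> simp_all

theorem substitutionCount_update_right_of_ne (hy : y j = some (x j)) {b : α} (hb : b ≠ x j) :
    substitutionCount x (update y j (some b)) = substitutionCount x y + 1 := by
  have := substitutionCount_add_ite_eq (x' := x) (y' := update y j (some b)) (j := j)
    fun i hi => ⟨rfl, (update_of_ne hi _ _).symm⟩
  simpa [hy, hb] using this.symm

theorem substitutionCount_update_right_self_le :
    substitutionCount x (update y j (some (x j))) ≤ substitutionCount x y := by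
  have := substitutionCount_add_ite_eq (x' := x) (y' := update y j (some (x j))) (j := j)
    fun i hi => ⟨rfl, (update_of_ne hi _ _).symm⟩
  split_ifs at this <;> simp_all

theorem substitutionCount_update_update (hy : y j = some (x j)) (a : α) :
    substitutionCount (update x j a) (update y j (some a)) = substitutionCount x y := by
  have := substitutionCount_add_ite_eq (x' := update x j a) (y' := update y j (some a)) (j := j)
    fun i hi => ⟨(update_of_ne hi _ _).symm, (update_of_ne hi _ _).symm⟩
  simpa [hy] using this.symm

end Update

end Words

section Ball

variable {ι α : Type*} [Fintype ι] [DecidableEq ι] [Fintype α] [DecidableEq α] {te ts : ℕ}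

def erasureSubstBall (te ts : ℕ) (x : ι → α) : Finset (ι → Option α) :=
  {y | erasureCount y ≤ te ∧ substitutionCount x y ≤ ts}

theorem mem_erasureSubstBall {x : ι → α} {y : ι → Option α} :
    y ∈ erasureSubstBall te ts x ↔ erasureCount y ≤ te ∧ substitutionCount x y ≤ ts := by
  simp [erasureSubstBall]

theorem card_inter_erasureSubstBall_relabel (π : Equiv.Perm ι) (g : ι → Equiv.Perm α)
    (x x' : ι → α) :
    #(erasureSubstBall te ts (fun i => g i (x (π i))) ∩
        erasureSubstBall te ts (fun i => g i (x' (π i)))) =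
      #(erasureSubstBall te ts x ∩ erasureSubstBall te ts x') :=
  (card_equiv (relabel π g) fun y => by
    simp [mem_erasureSubstBall, erasureCount_relabel, substitutionCount_relabel]).symm

theorem card_inter_erasureSubstBall_eq_of_hammingDist_eq {x₁ x₂ x₃ x₄ : ι → α}
    (h : hammingDist x₁ x₂ = hammingDist x₃ x₄) :
    #(erasureSubstBall te ts x₁ ∩ erasureSubstBall te ts x₂) =
      #(erasureSubstBall te ts x₃ ∩ erasureSubstBall te ts x₄) := by
  obtain ⟨π, hπ⟩ := Equiv.Perm.exists_map_finset_eq {i | x₁ i ≠ x₂ i} {i | x₃ i ≠ x₄ i} h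
  have hagree (i : ι) : x₃ (π i) = x₄ (π i) ↔ x₁ i = x₂ i := by
    have hmem : π i ∈ ({k | x₃ k ≠ x₄ k} : Finset ι) ↔ i ∈ ({k | x₁ k ≠ x₂ k} : Finset ι) := by
      rw [← hπ, mem_map_equiv, Equiv.symm_apply_apply]
    simpa using not_congr hmem
  choose g hg₁ hg₂ using fun i => exists_perm_apply_eq_and_apply_eq (hagree i)
  have e₁ : x₁ = fun i => g i (x₃ (π i)) := funext fun i => (hg₁ i).symm
  have e₂ : x₂ = fun i => g i (x₄ (π i)) := funext fun i => (hg₂ i).symm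
  rw [e₁, e₂, card_inter_erasureSubstBall_relabel]

section Step

variable {x x' : ι → α} {j : ι}

theorem apply_eq_and_update_mem_sdiff (hj : x j ≠ x' j) {y : ι → Option α}
    (hy : y ∈ (erasureSubstBall te ts x ∩ erasureSubstBall te ts x') \
      (erasureSubstBall te ts x ∩ erasureSubstBall te ts (update x' j (x j)))) :
    y j = some (x' j) ∧ update y j (some (x j)) ∈
      (erasureSubstBall te ts x ∩ erasureSubstBall te ts (update x' j (x j))) \
        (erasureSubstBall te ts x ∩ erasureSubstBall te ts x') := by
  simp only [mem_sdiff, mem_inter, mem_erasureSubstBall, not_and, not_le] at hy ⊢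
  obtain ⟨⟨⟨he, hs⟩, -, hs'⟩, hout⟩ := hy
  have hs'' := hout ⟨he, hs⟩ he
  have hyj : y j = some (x' j) := by
    by_contra hyj
    have := substitutionCount_update_left_le hyj (x j)
    omega
  have he' := erasureCount_update_some (y := y) (j := j) (by simp [hyj]) (x j)
  refine ⟨hyj, ⟨⟨he' ▸ he, substitutionCount_update_right_self_le.trans hs⟩, he' ▸ he,
    (substitutionCount_update_update hyj (x j)).le.trans hs'⟩, fun _ _ => ?_⟩
  rw [substitutionCount_update_right_of_ne hyj hj,
    ← substitutionCount_update_left_of_ne hyj hj]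
  exact hs''

theorem card_inter_erasureSubstBall_le_update (hj : x j ≠ x' j) :
    #(erasureSubstBall te ts x ∩ erasureSubstBall te ts x') ≤
      #(erasureSubstBall te ts x ∩ erasureSubstBall te ts (update x' j (x j))) := by
  rw [← card_sdiff_le_card_sdiff_iff]
  refine card_le_card_of_injOn (fun y => update y j (some (x j)))
    (fun y hy => (apply_eq_and_update_mem_sdiff hj hy).2) fun y hy z hz hyz => funext fun i => ?_
  by_cases hij : i = j
  · subst hij
    rw [(apply_eq_and_update_mem_sdiff hj hy).1, (apply_eq_and_update_mem_sdiff hj hz).1]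
  · simpa [hij] using congrFun hyz i

end Step

theorem card_inter_erasureSubstBall_le_of_hammingDist_le {x₁ x₂ x₃ x₄ : ι → α}
    (h : hammingDist x₁ x₂ ≤ hammingDist x₃ x₄) :
    #(erasureSubstBall te ts x₃ ∩ erasureSubstBall te ts x₄) ≤
      #(erasureSubstBall te ts x₁ ∩ erasureSubstBall te ts x₂) := by
  obtain ⟨k, hk⟩ := Nat.exists_eq_add_of_le h
  induction k generalizing x₃ x₄ with
  | zero => exact (card_inter_erasureSubstBall_eq_of_hammingDist_eq hk.symm).ge
  | succ k ih =>
    obtain ⟨j, hj⟩ := ne_iff.mp (hammingDist_pos.mp (by omega : 0 < hammingDist x₃ x₄))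
    have := hammingDist_update_add_one hj
    exact (card_inter_erasureSubstBall_le_update hj).trans (ih (by omega) (by omega))

end Ball

theorem card_filter_eraSubOutput_and (n q te ts : ℕ) (x x' : Fin n → Fin q) :
    (univ.filter (fun y : Fin n → Option (Fin q) =>
        EraSubOutput n q te ts x y ∧ EraSubOutput n q te ts x' y)).card =
      #(erasureSubstBall te ts x ∩ erasureSubstBall te ts x') := by
  rw [erasureSubstBall, erasureSubstBall, ← filter_and]
  rfl

/-- Monotonicity of intersections of erasure-substitution balls: if `d(x1,x2) ≤ d(x3,x4)` then
`|B^{e,s}_{te,ts}(x1) ∩ B^{e,s}_{te,ts}(x2)| ≥ |B^{e,s}_{te,ts}(x3) ∩ B^{e,s}_{te,ts}(x4)|`. -/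
theorem stmt6 (q n te ts : ℕ) (x1 x2 x3 x4 : Fin n → Fin q)
    (h : hammingDist x1 x2 ≤ hammingDist x3 x4) :
    (univ.filter (fun y : Fin n → Option (Fin q) =>
        EraSubOutput n q te ts x3 y ∧ EraSubOutput n q te ts x4 y)).card ≤
    (univ.filter (fun y : Fin n → Option (Fin q) =>
        EraSubOutput n q te ts x1 y ∧ EraSubOutput n q te ts x2 y)).card := by
  rw [card_filter_eraSubOutput_and, card_filter_eraSubOutput_and]
  exact card_inter_erasureSubstBall_le_of_hammingDist_le h
end

section
/- Counting bound used in Lemma 'l-1 kaukana': if n ≥ ℓ - 2 + (ℓ-1)²·2^b·(q-1)^{b-1}, b ≥ 1, ℓ ≥ 2, q ≥ 2, then Σ_{j=0}^{ℓ-2} Σ_{i=0}^{b} (q-1)^{i+j} C(b,i) C(n-b,j) < V_q(n, ℓ-1), where V_q(n,r) = Σ_{i=0}^{r} (q-1)^i C(n,i). -/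
/-!
Write `r = q - 1` and `a j = r ^ j * C(n, j)`, so that `V_q(n, ℓ - 1) = ∑_{j < ℓ} a j`. The binomial
theorem collapses the inner sum, so the left side is `q ^ b * ∑_{j < ℓ-1} r ^ j * C(n - b, j)`,
which is at most `q ^ b * ∑_{j < ℓ-1} a j`. The lower bound on `n` makes `C(n, j + 1) / C(n, j)`
large for `j < ℓ - 1`, and together with `q ≤ 2 r` this gives `a (j + 1) ≥ (ℓ - 1) * q ^ b * a j`.
So the terms grow so fast that `q ^ b * ∑_{j < ℓ-1} a j ≤ a (ℓ - 1)`, and the last term of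
`V_q(n, ℓ - 1)` alone dominates the left side; `a 0 = 1` makes the inequality strict.
-/

open Finset

theorem Nat.mul_choose_le_choose_succ {m n k : ℕ} (h : m * (k + 1) ≤ n - k) :
    m * n.choose k ≤ n.choose (k + 1) := by
  refine Nat.le_of_mul_le_mul_right ?_ k.succ_pos
  calc m * n.choose k * (k + 1) = n.choose k * (m * (k + 1)) := by ring
    _ ≤ n.choose k * (n - k) := Nat.mul_le_mul_left _ h
    _ = n.choose (k + 1) * (k + 1) := (Nat.choose_succ_right_eq n k).symm

theorem Nat.mul_sum_range_le_of_mul_le_succ {a : ℕ → ℕ} {N c : ℕ}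
    (h : ∀ k < N, N * c * a k ≤ a (k + 1)) : c * ∑ k ∈ range N, a k ≤ a N := by
  rcases Nat.eq_zero_or_pos c with rfl | hc
  · simp
  rcases Nat.eq_zero_or_pos N with rfl | hN
  · simp
  have hmono : MonotoneOn a (Set.Iic N) := by
    refine monotoneOn_of_le_succ Set.ordConnected_Iic fun k _ _ hk => ?_
    rw [Order.succ_eq_add_one] at hk ⊢
    exact (Nat.le_mul_of_pos_left _ (Nat.mul_pos hN hc)).trans (h k hk)
  refine Nat.le_of_mul_le_mul_left ?_ hN
  calc N * (c * ∑ k ∈ range N, a k) = ∑ k ∈ range N, N * c * a k := by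
        simp only [mul_sum, mul_assoc]
    _ ≤ ∑ _k ∈ range N, a N := sum_le_sum fun k hk =>
        (h k (mem_range.1 hk)).trans <|
          hmono (Set.mem_Iic.2 (mem_range.1 hk)) (Set.mem_Iic.2 le_rfl) (mem_range.1 hk)
    _ = N * a N := by rw [sum_const, card_range, smul_eq_mul]

theorem Nat.pow_le_two_pow_mul_pred_pow {q : ℕ} (hq : 1 ≤ q - 1) (b : ℕ) :
    q ^ b ≤ 2 ^ b * (q - 1) ^ (b - 1) * (q - 1) := by
  calc q ^ b ≤ (2 * (q - 1)) ^ b := Nat.pow_le_pow_left (by omega) b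
    _ = 2 ^ b * (q - 1) ^ b := mul_pow _ _ _
    _ ≤ 2 ^ b * ((q - 1) ^ (b - 1) * (q - 1)) :=
        Nat.mul_le_mul_left _ (pow_succ (q - 1) (b - 1) ▸ Nat.pow_le_pow_right hq (by omega))
    _ = 2 ^ b * (q - 1) ^ (b - 1) * (q - 1) := by ring

theorem Nat.sum_range_pred_pow_add_mul_choose_mul {q : ℕ} (hq : 1 ≤ q) (b j x : ℕ) :
    ∑ i ∈ range (b + 1), (q - 1) ^ (i + j) * b.choose i * x = q ^ b * ((q - 1) ^ j * x) := by
  have hbinom := add_pow (q - 1) 1 b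
  rw [Nat.sub_add_cancel hq] at hbinom
  rw [hbinom, sum_mul]
  refine sum_congr rfl fun i _ => ?_
  rw [Nat.cast_id]
  ring

theorem mul_pred_pow_mul_choose_le_succ {q n b ℓ k : ℕ} (hq : 2 ≤ q) (hk : k < ℓ - 1)
    (hn : ℓ - 2 + (ℓ - 1) ^ 2 * 2 ^ b * (q - 1) ^ (b - 1) ≤ n) :
    (ℓ - 1) * q ^ b * ((q - 1) ^ k * n.choose k) ≤ (q - 1) ^ (k + 1) * n.choose (k + 1) := by
  set m := (ℓ - 1) * 2 ^ b * (q - 1) ^ (b - 1)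
  have hm : m * (k + 1) ≤ n - k := by
    have : m * (k + 1) ≤ m * (ℓ - 1) := Nat.mul_le_mul_left _ hk
    have : m * (ℓ - 1) = (ℓ - 1) ^ 2 * 2 ^ b * (q - 1) ^ (b - 1) := by ring
    omega
  calc (ℓ - 1) * q ^ b * ((q - 1) ^ k * n.choose k)
      ≤ (ℓ - 1) * (2 ^ b * (q - 1) ^ (b - 1) * (q - 1)) * ((q - 1) ^ k * n.choose k) := by
        gcongr; exact Nat.pow_le_two_pow_mul_pred_pow (by omega) b
    _ = (q - 1) ^ (k + 1) * (m * n.choose k) := by ring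
    _ ≤ (q - 1) ^ (k + 1) * n.choose (k + 1) :=
        Nat.mul_le_mul_left _ (Nat.mul_choose_le_choose_succ hm)

theorem stmt10_general (q n b ℓ : ℕ) (hq : 2 ≤ q) (hl : 2 ≤ ℓ)
    (hn : ℓ - 2 + (ℓ - 1) ^ 2 * 2 ^ b * (q - 1) ^ (b - 1) ≤ n) :
    ∑ j ∈ Finset.range (ℓ - 1), ∑ i ∈ Finset.range (b + 1),
        (q - 1) ^ (i + j) * b.choose i * (n - b).choose j
      < ∑ i ∈ Finset.range ℓ, (q - 1) ^ i * n.choose i := by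
  set a : ℕ → ℕ := fun j => (q - 1) ^ j * n.choose j with ha
  have hratio : ∀ k < ℓ - 1, (ℓ - 1) * q ^ b * a k ≤ a (k + 1) := fun _ hk =>
    mul_pred_pow_mul_choose_le_succ hq hk hn
  obtain ⟨N, rfl⟩ : ∃ N, ℓ = N + 1 := ⟨ℓ - 1, by omega⟩
  rw [Nat.add_sub_cancel] at hratio ⊢
  have ha0 : a 0 ≤ ∑ j ∈ range N, a j :=
    single_le_sum (fun _ _ => Nat.zero_le _) (mem_range.2 (by omega))
  have ha0_eq : a 0 = 1 := by simp [ha]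
  calc ∑ j ∈ range N, ∑ i ∈ range (b + 1), (q - 1) ^ (i + j) * b.choose i * (n - b).choose j
      = q ^ b * ∑ j ∈ range N, (q - 1) ^ j * (n - b).choose j := by
        simp only [Nat.sum_range_pred_pow_add_mul_choose_mul (by omega : 1 ≤ q), ← mul_sum]
    _ ≤ q ^ b * ∑ j ∈ range N, a j := by
        gcongr with j
        exact Nat.mul_le_mul_left _ (Nat.choose_le_choose j (Nat.sub_le n b))
    _ ≤ a N := Nat.mul_sum_range_le_of_mul_le_succ hratio
    _ < ∑ j ∈ range N, a j + a N := by omega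
    _ = ∑ i ∈ range (N + 1), (q - 1) ^ i * n.choose i := (sum_range_succ a N).symm

/-- Counting bound: if `n ≥ ℓ-2 + (ℓ-1)²·2^b·(q-1)^{b-1}`, `b ≥ 1`, `ℓ ≥ 2`, `q ≥ 2`, then
`Σ_{j=0}^{ℓ-2} Σ_{i=0}^{b} (q-1)^{i+j} C(b,i) C(n-b,j) < V_q(n,ℓ-1)`. -/
theorem stmt10 (q n b ℓ : ℕ) (hq : 2 ≤ q) (hl : 2 ≤ ℓ) (hb : 1 ≤ b)
    (hn : ℓ - 2 + (ℓ - 1) ^ 2 * 2 ^ b * (q - 1) ^ (b - 1) ≤ n) :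
    ∑ j ∈ Finset.range (ℓ - 1), ∑ i ∈ Finset.range (b + 1),
        (q - 1) ^ (i + j) * b.choose i * (n - b).choose j
      < ∑ i ∈ Finset.range ℓ, (q - 1) ^ i * n.choose i :=
  stmt10_general q n b ℓ hq hl hn
end

section
/- Let t = e + ℓ, n ≥ ℓ-2 + (ℓ-1)²·2^{2t}·(q-1)^{2t-1}, let C ⊆ Z_q^n be an e-error-correcting code, and Y a set of at least V_q(n, ℓ-1) + 1 distinct words such that every y ∈ Y is within Hamming distance t of both c1 and c2, where c1, c2 ∈ C. Then d(c1, c2) ≤ 2e + 2. -/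
/-!
Suppose `d(c1, c2) ≥ 2e + 3` and let `S` be the set of coordinates where `c1` and `c2` differ.
Every coordinate of `S` counts in `d(c1, y)` or in `d(c2, y)`, and every coordinate outside `S`
where `y` leaves `c1` counts in both; since `d(c1, y) + d(c2, y) ≤ 2t`, each `y ∈ Y` leaves `c1` in
at most `ℓ - 2` coordinates outside `S`. Hence `y` is determined by a word of weight `≤ t` supported
on `S` (at most `V_q(|S|, t) ≤ 2^{2t} (q-1)^{2t-1}` choices, as `|S| ≤ 2t`) and a word of weight
`≤ ℓ - 2` supported off `S` (at most `V_q(n, ℓ-2)` choices). The bound on `n` makes the product of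
these counts at most the top term `(q-1)^{ℓ-1} C(n, ℓ-1)` of `V_q(n, ℓ-1)`, contradicting
`|Y| > V_q(n, ℓ-1)`.
-/

open Finset

namespace Nat

theorem choose_le_choose_of_le_of_le_half {n r k : ℕ} (hrk : r ≤ k) (hk : k ≤ n / 2) :
    n.choose r ≤ n.choose k := by
  induction k, hrk using Nat.le_induction with
  | base => rfl
  | succ k _ ih => exact (ih (by omega)).trans (choose_le_succ_of_lt_half_left (by omega))

theorem sum_range_choose_le_two_pow (n r : ℕ) : ∑ i ∈ range r, n.choose i ≤ 2 ^ n := by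
  rw [← sum_range_choose n]
  refine sum_le_sum_of_ne_zero fun i _ hi => mem_range.2 (Nat.lt_succ_of_le ?_)
  by_contra! h
  exact hi (choose_eq_zero_of_lt h)

end Nat

/-- The paper's `V_q(n, r)`: the number of words of `(Z_q)^n` within distance `r`
of a given word. -/
def hammingVolume (q n r : ℕ) : ℕ := ∑ i ∈ range (r + 1), (q - 1) ^ i * n.choose i

section hammingVolume

variable {q : ℕ}

theorem hammingVolume_mono_left {n n' : ℕ} (h : n ≤ n') (r : ℕ) :
    hammingVolume q n r ≤ hammingVolume q n' r :=
  sum_le_sum fun i _ => Nat.mul_le_mul_left _ (Nat.choose_le_choose i h)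

theorem hammingVolume_le_pow_mul_two_pow (hq : 2 ≤ q) (n r : ℕ) :
    hammingVolume q n r ≤ (q - 1) ^ r * 2 ^ n :=
  calc hammingVolume q n r ≤ ∑ i ∈ range (r + 1), (q - 1) ^ r * n.choose i :=
        sum_le_sum fun i hi =>
          Nat.mul_le_mul_right _ (Nat.pow_le_pow_right (by omega) (by simp at hi; omega))
    _ ≤ (q - 1) ^ r * 2 ^ n := by
        rw [← mul_sum]; exact Nat.mul_le_mul_left _ (Nat.sum_range_choose_le_two_pow n _)

theorem hammingVolume_le_mul_choose (hq : 2 ≤ q) {n r : ℕ} (h : r ≤ n / 2) :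
    hammingVolume q n r ≤ (r + 1) * ((q - 1) ^ r * n.choose r) :=
  calc hammingVolume q n r ≤ ∑ i ∈ range (r + 1), (q - 1) ^ r * n.choose r :=
        sum_le_sum fun i hi => by
          have hir : i ≤ r := by simp at hi; omega
          exact Nat.mul_le_mul (Nat.pow_le_pow_right (by omega) hir)
            (Nat.choose_le_choose_of_le_of_le_half hir h)
    _ = (r + 1) * ((q - 1) ^ r * n.choose r) := by rw [sum_const, card_range, smul_eq_mul]

theorem mul_pow_mul_choose_le (hq : 2 ≤ q) {n r X : ℕ} (h : r + (r + 1) ^ 2 * X ≤ n) :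
    (r + 1) * X * ((q - 1) ^ r * n.choose r) ≤ (q - 1) ^ (r + 1) * n.choose (r + 1) := by
  refine Nat.le_of_mul_le_mul_left ?_ (Nat.succ_pos r)
  calc (r + 1) * ((r + 1) * X * ((q - 1) ^ r * n.choose r))
      = (q - 1) ^ r * n.choose r * ((r + 1) ^ 2 * X) := by ring
    _ ≤ (q - 1) ^ r * n.choose r * (n - r) := Nat.mul_le_mul_left _ (by omega)
    _ = (q - 1) ^ r * (n.choose (r + 1) * (r + 1)) := by rw [Nat.choose_succ_right_eq]; ring
    _ ≤ (q - 1) ^ (r + 1) * (n.choose (r + 1) * (r + 1)) :=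
        Nat.mul_le_mul_right _ (Nat.pow_le_pow_right (by omega) r.le_succ)
    _ = (r + 1) * ((q - 1) ^ (r + 1) * n.choose (r + 1)) := by ring

theorem mul_hammingVolume_le (hq : 2 ≤ q) {n r X : ℕ} (h : r + (r + 1) ^ 2 * X ≤ n) :
    X * hammingVolume q n r ≤ hammingVolume q n (r + 1) := by
  rcases Nat.eq_zero_or_pos X with rfl | hX
  · simp
  have hr : r ≤ n / 2 := by
    have : r + 1 ≤ (r + 1) ^ 2 * X :=
      (Nat.le_self_pow two_ne_zero _).trans (Nat.le_mul_of_pos_right _ hX)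
    omega
  calc X * hammingVolume q n r ≤ (r + 1) * X * ((q - 1) ^ r * n.choose r) := by
        rw [mul_comm (r + 1), mul_assoc]
        exact Nat.mul_le_mul_left _ (hammingVolume_le_mul_choose hq hr)
    _ ≤ (q - 1) ^ (r + 1) * n.choose (r + 1) := mul_pow_mul_choose_le hq h
    _ ≤ hammingVolume q n (r + 1) := by
        rw [hammingVolume, sum_range_succ]; exact Nat.le_add_left _ _

end hammingVolume

section Words

variable {ι β : Type*} [Fintype ι] [DecidableEq β]

theorem hammingDist_add_two_mul_card_le (x y z : ι → β) :
    hammingDist x z + 2 * #{i | x i = z i ∧ y i ≠ x i} ≤ hammingDist x y + hammingDist y z := by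
  simp only [hammingDist, card_filter, mul_sum, ← sum_add_distrib]
  refine sum_le_sum fun i _ => ?_
  split_ifs <;> simp_all

variable [DecidableEq ι] [Fintype β]

theorem card_differ_exactly_on_eq_pow (c : ι → β) (K : Finset ι) :
    #{z : ι → β | ({i | c i ≠ z i} : Finset ι) = K} = (Fintype.card β - 1) ^ #K := by
  have hpi : ({z : ι → β | ({i | c i ≠ z i} : Finset ι) = K} : Finset _) =
      Fintype.piFinset fun i => if i ∈ K then univ.erase (c i) else {c i} := by
    ext z
    simp only [mem_filter, mem_univ, true_and, Fintype.mem_piFinset, Finset.ext_iff]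
    refine forall_congr' fun i => ?_
    split_ifs with hi <;> simp [hi, eq_comm]
  rw [hpi, Fintype.card_piFinset]
  simp only [apply_ite card, card_erase_of_mem (mem_univ _), card_univ, card_singleton]
  rw [prod_ite_mem univ K, univ_inter, prod_const]

theorem card_hammingBall_agreeing_off_le (c : ι → β) (S : Finset ι) (r : ℕ) :
    #{z : ι → β | hammingDist c z ≤ r ∧ ∀ i ∉ S, z i = c i} ≤
      hammingVolume (Fintype.card β) #S r := by
  set w := Fintype.card β - 1
  calc #{z : ι → β | hammingDist c z ≤ r ∧ ∀ i ∉ S, z i = c i}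
      = ∑ K ∈ S.powerset with #K ≤ r,
          #{z : ι → β | (hammingDist c z ≤ r ∧ ∀ i ∉ S, z i = c i) ∧
            ({i | c i ≠ z i} : Finset ι) = K} := by
        rw [card_eq_sum_card_fiberwise (t := {K ∈ S.powerset | #K ≤ r})
          (f := fun z : ι → β => ({i | c i ≠ z i} : Finset ι))]
        · simp only [filter_filter]
        · intro z hz
          simp only [coe_filter, mem_univ, true_and, Set.mem_ofPred_eq] at hz
          simp only [coe_filter, mem_powerset, Set.mem_ofPred_eq]
          refine ⟨fun i hi => ?_, hz.1⟩
          by_contra hiS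
          simp [hz.2 i hiS] at hi
    _ ≤ ∑ K ∈ S.powerset with #K ≤ r, w ^ #K :=
        sum_le_sum fun K _ => (card_le_card fun z => by simp only [mem_filter]; tauto).trans
          (card_differ_exactly_on_eq_pow c K).le
    _ = ∑ m ∈ range (#S + 1) with m ≤ r, w ^ m * (#S).choose m := by
        rw [sum_filter, sum_powerset_apply_card (fun m => if m ≤ r then w ^ m else 0), sum_filter]
        refine sum_congr rfl fun m _ => ?_
        split_ifs <;> simp [mul_comm]
    _ ≤ hammingVolume (Fintype.card β) #S r :=
        sum_le_sum_of_subset fun m hm => by simp at hm ⊢; omega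

theorem card_le_hammingVolume_mul_hammingVolume {Y : Finset (ι → β)} {c : ι → β}
    (S : Finset ι) {r m : ℕ} (hr : ∀ y ∈ Y, hammingDist c y ≤ r)
    (hm : ∀ y ∈ Y, #{i | i ∉ S ∧ y i ≠ c i} ≤ m) :
    #Y ≤ hammingVolume (Fintype.card β) #S r * hammingVolume (Fintype.card β) #Sᶜ m := by
  set A : Finset (ι → β) := {z | hammingDist c z ≤ r ∧ ∀ i ∉ S, z i = c i}
  set B : Finset (ι → β) := {z | hammingDist c z ≤ m ∧ ∀ i ∉ Sᶜ, z i = c i}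
  have hmaps : ∀ y ∈ Y, (S.piecewise y c, S.piecewise c y) ∈ A ×ˢ B := by
    intro y hy
    simp only [A, B, mem_product, mem_filter, mem_univ, true_and, mem_compl, not_not]
    refine ⟨⟨(card_le_card fun i => ?_).trans (hr y hy), fun i => piecewise_eq_of_notMem _ _ _⟩,
      ⟨(card_le_card fun i => ?_).trans (hm y hy), fun i => piecewise_eq_of_mem _ _ _⟩⟩
    · by_cases hi : i ∈ S <;> simp [hi]
    · by_cases hi : i ∈ S <;> simp [hi, eq_comm]
  have hinj : Set.InjOn (fun y => (S.piecewise y c, S.piecewise c y)) Y := by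
    intro y _ y' _ h
    simp only [Prod.mk.injEq] at h
    funext i
    by_cases hi : i ∈ S
    · simpa [hi] using congrFun h.1 i
    · simpa [hi] using congrFun h.2 i
  calc #Y ≤ #(A ×ˢ B) := card_le_card_of_injOn _ hmaps hinj
    _ = #A * #B := card_product A B
    _ ≤ _ := Nat.mul_le_mul (card_hammingBall_agreeing_off_le c S r)
        (card_hammingBall_agreeing_off_le c Sᶜ m)

end Words

theorem stmt11_general (q n e ℓ t : ℕ) (ht : t = e + ℓ) (hq : 2 ≤ q)
    (hn : ℓ - 2 + (ℓ - 1) ^ 2 * 2 ^ (2 * t) * (q - 1) ^ (2 * t - 1) ≤ n)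
    (Y : Finset (Fin n → Fin q))
    (hY : (∑ i ∈ Finset.range ℓ, (q - 1) ^ i * n.choose i) + 1 ≤ Y.card)
    (c1 : Fin n → Fin q) (c2 : Fin n → Fin q)
    (h1 : ∀ y ∈ Y, hammingDist c1 y ≤ t) (h2 : ∀ y ∈ Y, hammingDist c2 y ≤ t) :
    hammingDist c1 c2 ≤ 2 * e + 2 := by
  by_contra! hd
  obtain ⟨y₀, hy₀⟩ : Y.Nonempty := card_pos.1 (by omega)
  have hdt : hammingDist c1 c2 ≤ 2 * t := by
    have := hammingDist_triangle c1 y₀ c2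
    have := h1 y₀ hy₀
    have := hammingDist_comm c2 y₀ ▸ h2 y₀ hy₀
    omega
  obtain ⟨r, rfl⟩ : ∃ r, ℓ = r + 2 := ⟨ℓ - 2, by omega⟩
  set S : Finset (Fin n) := {i | c1 i ≠ c2 i}
  have hoff : ∀ y ∈ Y, #{i | i ∉ S ∧ y i ≠ c1 i} ≤ r := by
    intro y hy
    have := hammingDist_add_two_mul_card_le c1 y c2
    have := h1 y hy
    have := hammingDist_comm c2 y ▸ h2 y hy
    have hS : #{i | i ∉ S ∧ y i ≠ c1 i} = #{i | c1 i = c2 i ∧ y i ≠ c1 i} := by simp [S]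
    omega
  have hX : hammingVolume q (hammingDist c1 c2) t ≤ 2 ^ (2 * t) * (q - 1) ^ (2 * t - 1) :=
    (hammingVolume_le_pow_mul_two_pow hq _ t).trans_eq (mul_comm _ _) |>.trans
      (Nat.mul_le_mul (Nat.pow_le_pow_right two_pos hdt)
        (Nat.pow_le_pow_right (by omega) (by omega)))
  have hSc : #Sᶜ ≤ n := (card_le_univ _).trans_eq (Fintype.card_fin n)
  refine lt_irrefl #Y ?_
  calc #Y ≤ hammingVolume q #S t * hammingVolume q #Sᶜ r := by
        simpa using card_le_hammingVolume_mul_hammingVolume S h1 hoff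
    _ ≤ 2 ^ (2 * t) * (q - 1) ^ (2 * t - 1) * hammingVolume q n r :=
        Nat.mul_le_mul hX (hammingVolume_mono_left hSc r)
    _ ≤ hammingVolume q n (r + 1) := mul_hammingVolume_le hq (by simpa [mul_assoc] using hn)
    _ < #Y := hY

/-- Lemma "Listasanat lähellä": with `t = e + ℓ`, `n ≥ ℓ-2 + (ℓ-1)²·2^{2t}·(q-1)^{2t-1}`,
`C` an `e`-error-correcting code, and `Y` a set of at least `V_q(n,ℓ-1)+1` distinct words each
within distance `t` of both `c1, c2 ∈ C`, we have `d(c1,c2) ≤ 2e+2`. -/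
theorem stmt11 (q n e ℓ t : ℕ) (ht : t = e + ℓ) (hq : 2 ≤ q) (hl : 1 ≤ ℓ)
    (hn : ℓ - 2 + (ℓ - 1) ^ 2 * 2 ^ (2 * t) * (q - 1) ^ (2 * t - 1) ≤ n)
    (C : Finset (Fin n → Fin q))
    (hC : ∀ c1 ∈ C, ∀ c2 ∈ C, c1 ≠ c2 → 2 * e + 1 ≤ hammingDist c1 c2)
    (Y : Finset (Fin n → Fin q))
    (hY : (∑ i ∈ Finset.range ℓ, (q - 1) ^ i * n.choose i) + 1 ≤ Y.card)
    (c1 : Fin n → Fin q) (c2 : Fin n → Fin q) (hc1 : c1 ∈ C) (hc2 : c2 ∈ C)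
    (h1 : ∀ y ∈ Y, hammingDist c1 y ≤ t) (h2 : ∀ y ∈ Y, hammingDist c2 y ≤ t) :
    hammingDist c1 c2 ≤ 2 * e + 2 :=
  stmt11_general q n e ℓ t ht hq hn Y hY c1 c2 h1 h2
end

section
/- Let ℓ ≥ 1, q ≥ 3, t = e + ℓ, let C ⊆ Z_q^n be an e-error-correcting code, and let Y be a set of at least V_q(n, ℓ-1) + 1 distinct words. Suppose w ∈ Z_q^n satisfies d(w, c) ≤ e + 1 for every c ∈ T(Y) = ∩_{y∈Y} B_t(y) ∩ C. Then |T(Y)| ≤ ℓ(q-1) + 1. -/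
/-!
Some `y ∈ Y` is at distance `m ≥ ℓ` from `w`, because the ball of radius `ℓ - 1` around `w` has at
most `V_q(n, ℓ - 1)` words. Two codewords of `T = T(Y)` that differ from `w` in the same coordinate
differ from each other there, or else they would be at distance at most `2e`. Hence on each of the
`m` coordinates `D` where `w` and `y` differ, at most `q - 1` codewords differ from `w` and at most
one agrees with `y`. Summing the identity
`d(c, y) + #{j ∈ D | c j ≠ w j} + #{j ∈ D | c j = y j} = m + d(w, c)` over `T`, with
`d(c, y) ≤ e + ℓ` and `d(w, c) = e + 1` for all codewords but one (which is at distance `≥ e`),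
bounds `|T|` when `m > ℓ`. When `m = ℓ`, every codeword but one differs from `w` somewhere on `D`,
so `|T| ≤ ℓ (q - 1) + 1` directly.
-/

open Finset

theorem Finset.sum_card_filter_le_card_mul {β γ : Type*} (s : Finset β) (t : Finset γ)
    (r : β → γ → Prop) [∀ a b, Decidable (r a b)] {k : ℕ}
    (h : ∀ b ∈ t, #{a ∈ s | r a b} ≤ k) : ∑ a ∈ s, #{b ∈ t | r a b} ≤ #t * k := by
  rw [← smul_eq_mul]
  exact (sum_card_bipartiteAbove_eq_sum_card_bipartiteBelow r).trans_le
    (sum_le_card_nsmul _ _ _ h)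

section Hamming

variable {ι α : Type*} [Fintype ι] [DecidableEq α]

def diffSet (x y : ι → α) : Finset ι := {i | x i ≠ y i}

theorem card_diffSet (x y : ι → α) : #(diffSet x y) = hammingDist x y := rfl

@[simp]
theorem mem_diffSet {x y : ι → α} {i : ι} : i ∈ diffSet x y ↔ x i ≠ y i := by
  simp [diffSet]

theorem card_filter_hammingDist_eq_le [DecidableEq ι] [Fintype α] (x : ι → α) (i : ℕ) :
    #{y | hammingDist x y = i} ≤ (Fintype.card α - 1) ^ i * (Fintype.card ι).choose i := by
  rw [card_eq_sum_card_fiberwise (s := {y | hammingDist x y = i})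
    (f := diffSet x) (t := powersetCard i univ)
    fun y hy => mem_powersetCard.2 ⟨subset_univ _, (mem_filter.1 hy).2⟩]
  calc _ ≤ ∑ _s ∈ powersetCard i (univ : Finset ι), (Fintype.card α - 1) ^ i :=
        sum_le_sum fun s hs => ?_
    _ = _ := by rw [sum_const, card_powersetCard, card_univ, smul_eq_mul, mul_comm]
  obtain ⟨-, hs⟩ := mem_powersetCard.1 hs
  calc _ ≤ #(s.pi fun j => univ.erase (x j)) :=
        card_le_card_of_injOn (fun y j _ => y j) ?_ ?_
    _ = _ := by simp [card_pi, card_univ, hs]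
  · intro y hy
    simp only [coe_filter, Set.mem_ofPred_eq, mem_filter, mem_univ, true_and] at hy
    refine mem_pi.2 fun j hj => mem_erase.2 ⟨fun h => ?_, mem_univ _⟩
    rw [← hy.2, mem_diffSet] at hj
    exact hj h.symm
  · intro y₁ h₁ y₂ h₂ h
    simp only [coe_filter, Set.mem_ofPred_eq, mem_filter, mem_univ, true_and] at h₁ h₂
    have agree_off {y : ι → α} (hy : diffSet x y = s) {j} (hj : j ∉ s) : y j = x j := by
      by_contra h
      exact hj (hy ▸ mem_diffSet.2 (Ne.symm h))
    funext j
    by_cases hj : j ∈ s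
    · exact congrFun (congrFun h j) hj
    · rw [agree_off h₁.2 hj, agree_off h₂.2 hj]

theorem card_filter_hammingDist_lt_le [DecidableEq ι] [Fintype α] (x : ι → α) (R : ℕ) :
    #{y | hammingDist x y < R} ≤
      ∑ i ∈ range R, (Fintype.card α - 1) ^ i * (Fintype.card ι).choose i := by
  rw [card_eq_sum_card_fiberwise (s := {y | hammingDist x y < R}) (f := hammingDist x)
    (t := range R) fun y hy => mem_range.2 (mem_filter.1 hy).2]
  refine sum_le_sum fun i _ =>
    (card_le_card fun y hy => ?_).trans (card_filter_hammingDist_eq_le x i)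
  simp only [mem_filter] at hy ⊢
  exact ⟨hy.1.1, hy.2⟩

theorem exists_mem_le_hammingDist [DecidableEq ι] [Fintype α] {Y : Finset (ι → α)} (x : ι → α)
    {R : ℕ}
    (hY : ∑ i ∈ range R, (Fintype.card α - 1) ^ i * (Fintype.card ι).choose i < #Y) :
    ∃ y ∈ Y, R ≤ hammingDist x y := by
  by_contra! h
  refine hY.not_ge ((card_le_card fun y hy => ?_).trans (card_filter_hammingDist_lt_le x R))
  exact mem_filter.2 ⟨mem_univ y, h y hy⟩

theorem hammingDist_add_two_le {x y z : ι → α} {j : ι} (hxz : x j = z j) (hxy : x j ≠ y j) :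
    hammingDist x z + 2 ≤ hammingDist x y + hammingDist y z := by
  classical
  have key : ∀ i, (if x i ≠ z i then 1 else 0) + (if i = j then 2 else 0) ≤
      (if x i ≠ y i then 1 else 0) + (if y i ≠ z i then 1 else 0) := by
    intro i
    by_cases hi : i = j
    · subst hi
      rw [← hxz]
      simp [hxy, Ne.symm hxy]
    · simp only [hi, if_false, add_zero]
      split_ifs <;> simp_all
  have := sum_le_sum fun i (_ : i ∈ univ) => key i
  simpa [sum_add_distrib, hammingDist, card_filter] using this

theorem hammingDist_add_card_add_card (w y c : ι → α) :
    hammingDist c y + #{j ∈ diffSet w y | c j ≠ w j} + #{j ∈ diffSet w y | c j = y j} =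
      hammingDist w y + hammingDist w c := by
  simp only [diffSet, hammingDist, filter_filter, card_filter, ← sum_add_distrib]
  refine sum_congr rfl fun j _ => ?_
  split_ifs <;> grind

theorem filter_apply_eq_subset_filter_apply_ne (w y c : ι → α) :
    {j ∈ diffSet w y | c j = y j} ⊆ {j ∈ diffSet w y | c j ≠ w j} := by
  intro j
  simp only [diffSet, mem_filter, mem_univ, true_and]
  rintro ⟨hwy, hcy⟩
  exact ⟨hwy, hcy ▸ hwy.symm⟩

variable {T : Finset (ι → α)} {e : ℕ} {w : ι → α}

theorem eq_of_apply_eq_of_apply_ne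
    (hT : ∀ c₁ ∈ T, ∀ c₂ ∈ T, c₁ ≠ c₂ → 2 * e + 1 ≤ hammingDist c₁ c₂)
    (hw : ∀ c ∈ T, hammingDist w c ≤ e + 1) {c₁ c₂ : ι → α} (h₁ : c₁ ∈ T) (h₂ : c₂ ∈ T)
    {j : ι} (hj : c₁ j = c₂ j) (hjw : c₁ j ≠ w j) : c₁ = c₂ := by
  by_contra hne
  have := hammingDist_add_two_le hj hjw
  rw [hammingDist_comm c₁ w] at this
  have := hT c₁ h₁ c₂ h₂ hne
  have := hw c₁ h₁
  have := hw c₂ h₂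
  omega

theorem card_filter_apply_ne_le [Fintype α]
    (hT : ∀ c₁ ∈ T, ∀ c₂ ∈ T, c₁ ≠ c₂ → 2 * e + 1 ≤ hammingDist c₁ c₂)
    (hw : ∀ c ∈ T, hammingDist w c ≤ e + 1) (j : ι) :
    #{c ∈ T | c j ≠ w j} ≤ Fintype.card α - 1 := by
  calc #{c ∈ T | c j ≠ w j} ≤ #(univ.erase (w j)) :=
        card_le_card_of_injOn (· j) (fun c hc => mem_erase.2 ⟨(mem_filter.1 hc).2, mem_univ _⟩)
          fun c₁ h₁ c₂ h₂ h => eq_of_apply_eq_of_apply_ne hT hw (mem_filter.1 h₁).1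
            (mem_filter.1 h₂).1 h (mem_filter.1 h₁).2
    _ = Fintype.card α - 1 := by rw [card_erase_of_mem (mem_univ _), card_univ]

theorem card_filter_apply_eq_le_one
    (hT : ∀ c₁ ∈ T, ∀ c₂ ∈ T, c₁ ≠ c₂ → 2 * e + 1 ≤ hammingDist c₁ c₂)
    (hw : ∀ c ∈ T, hammingDist w c ≤ e + 1) {j : ι} {a : α} (ha : a ≠ w j) :
    #{c ∈ T | c j = a} ≤ 1 := by
  refine card_le_one.2 fun c₁ h₁ c₂ h₂ => ?_
  rw [mem_filter] at h₁ h₂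
  exact eq_of_apply_eq_of_apply_ne hT hw h₁.1 h₂.1 (h₁.2.trans h₂.2.symm) (h₁.2 ▸ ha)

theorem card_filter_hammingDist_le_le_one
    (hT : ∀ c₁ ∈ T, ∀ c₂ ∈ T, c₁ ≠ c₂ → 2 * e + 1 ≤ hammingDist c₁ c₂) (v : ι → α) :
    #{c ∈ T | hammingDist v c ≤ e} ≤ 1 := by
  refine card_le_one.2 fun c₁ h₁ c₂ h₂ => ?_
  rw [mem_filter] at h₁ h₂
  by_contra hne
  have := hT c₁ h₁.1 c₂ h₂.1 hne
  have := hammingDist_triangle c₁ v c₂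
  rw [hammingDist_comm c₁ v] at this
  omega

theorem card_mul_le_sum_hammingDist_add_one
    (hT : ∀ c₁ ∈ T, ∀ c₂ ∈ T, c₁ ≠ c₂ → 2 * e + 1 ≤ hammingDist c₁ c₂)
    (hw : ∀ c ∈ T, hammingDist w c ≤ e + 1) (hT₂ : 1 < #T) :
    #T * (e + 1) ≤ ∑ c ∈ T, hammingDist w c + 1 := by
  have hfar (c) (hc : c ∈ T) : e + 1 ≤ hammingDist w c + if hammingDist w c ≤ e then 1 else 0 := by
    obtain ⟨c', hc', hne⟩ := exists_mem_ne hT₂ c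
    have := hT c' hc' c hc hne
    have := hammingDist_triangle c' w c
    rw [hammingDist_comm c' w] at this
    have := hw c' hc'
    split_ifs <;> omega
  calc #T * (e + 1) = ∑ _c ∈ T, (e + 1) := by rw [sum_const, smul_eq_mul]
    _ ≤ ∑ c ∈ T, (hammingDist w c + if hammingDist w c ≤ e then 1 else 0) := sum_le_sum hfar
    _ = ∑ c ∈ T, hammingDist w c + #{c ∈ T | hammingDist w c ≤ e} := by
      rw [sum_add_distrib, card_filter]
    _ ≤ ∑ c ∈ T, hammingDist w c + 1 := by
      grw [card_filter_hammingDist_le_le_one hT w]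

theorem card_le_of_hammingDist_eq [Fintype α]
    (hT : ∀ c₁ ∈ T, ∀ c₂ ∈ T, c₁ ≠ c₂ → 2 * e + 1 ≤ hammingDist c₁ c₂)
    (hw : ∀ c ∈ T, hammingDist w c ≤ e + 1) {y : ι → α} {ℓ : ℕ}
    (hy : ∀ c ∈ T, hammingDist c y ≤ e + ℓ) (hm : hammingDist w y = ℓ) :
    #T ≤ ℓ * (Fintype.card α - 1) + 1 := by
  have hP (c) (hc : c ∈ T) :
      1 ≤ #{j ∈ diffSet w y | c j ≠ w j} + if hammingDist w c ≤ e then 1 else 0 := by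
    have := hammingDist_add_card_add_card w y c
    have := card_le_card (filter_apply_eq_subset_filter_apply_ne w y c)
    have := hy c hc
    split_ifs <;> omega
  calc #T = ∑ _c ∈ T, 1 := card_eq_sum_ones T
    _ ≤ ∑ c ∈ T, (#{j ∈ diffSet w y | c j ≠ w j} + if hammingDist w c ≤ e then 1 else 0) :=
      sum_le_sum hP
    _ = ∑ c ∈ T, #{j ∈ diffSet w y | c j ≠ w j} + #{c ∈ T | hammingDist w c ≤ e} := by
      rw [sum_add_distrib, card_filter]
    _ ≤ ℓ * (Fintype.card α - 1) + 1 := by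
      grw [sum_card_filter_le_card_mul T (diffSet w y) _ fun j _ =>
          card_filter_apply_ne_le hT hw j,
        card_filter_hammingDist_le_le_one hT w, card_diffSet, hm]

theorem card_le_of_lt_hammingDist [Fintype α]
    (hT : ∀ c₁ ∈ T, ∀ c₂ ∈ T, c₁ ≠ c₂ → 2 * e + 1 ≤ hammingDist c₁ c₂)
    (hw : ∀ c ∈ T, hammingDist w c ≤ e + 1) {y : ι → α} {ℓ : ℕ}
    (hy : ∀ c ∈ T, hammingDist c y ≤ e + ℓ) (hℓ : 1 ≤ ℓ) (hm : ℓ < hammingDist w y) :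
    #T ≤ ℓ * (Fintype.card α - 1) + 1 := by
  by_contra! hN
  obtain ⟨j, hj⟩ := Function.ne_iff.1 (hammingDist_pos.1 (by omega : 0 < hammingDist w y))
  have hq : 1 < Fintype.card α := Fintype.one_lt_card_iff.2 ⟨_, _, hj⟩
  set m := hammingDist w y
  have key : #T * m + #T * (e + 1) ≤ #T * (e + ℓ) + m * (Fintype.card α - 1) + m * 1 + 1 :=
    calc #T * m + #T * (e + 1) ≤ #T * m + (∑ c ∈ T, hammingDist w c + 1) := by
          grw [card_mul_le_sum_hammingDist_add_one hT hw (by omega)]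
      _ = ∑ c ∈ T, (hammingDist c y + #{j ∈ diffSet w y | c j ≠ w j} +
            #{j ∈ diffSet w y | c j = y j}) + 1 := by
          rw [sum_congr rfl fun c _ => hammingDist_add_card_add_card w y c, sum_add_distrib,
            sum_const, smul_eq_mul, add_assoc]
      _ = ∑ c ∈ T, hammingDist c y + ∑ c ∈ T, #{j ∈ diffSet w y | c j ≠ w j} +
            ∑ c ∈ T, #{j ∈ diffSet w y | c j = y j} + 1 := by
          rw [sum_add_distrib, sum_add_distrib]
      _ ≤ #T * (e + ℓ) + m * (Fintype.card α - 1) + m * 1 + 1 := by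
          gcongr
          · exact (sum_le_card_nsmul _ _ _ hy).trans_eq (smul_eq_mul _ _)
          · exact sum_card_filter_le_card_mul T (diffSet w y) _ fun j _ =>
              card_filter_apply_ne_le hT hw j
          · exact sum_card_filter_le_card_mul T (diffSet w y) _ fun j hj =>
              card_filter_apply_eq_le_one hT hw (Ne.symm (mem_diffSet.1 hj))
  -- `key` reads `|T| (m - ℓ + 1) ≤ m q + 1`, too small for `|T| ≥ ℓ (q - 1) + 2` once `m > ℓ`.
  obtain ⟨p, hp⟩ : ∃ p, Fintype.card α - 1 = p + 1 := ⟨Fintype.card α - 2, by omega⟩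
  obtain ⟨l, rfl⟩ : ∃ l, ℓ = l + 1 := ⟨ℓ - 1, by omega⟩
  obtain ⟨k, hk⟩ : ∃ k, m = l + k + 2 := ⟨m - l - 2, by omega⟩
  rw [hp] at key hN
  rw [hk] at key
  have hN' : (l + 1) * (p + 1) + 2 ≤ #T := hN
  nlinarith [Nat.mul_le_mul_right (k + 2) hN', Nat.zero_le (l * p * k)]

theorem card_le_of_le_hammingDist [Fintype α] {y : ι → α} {ℓ : ℕ}
    (hT : ∀ c₁ ∈ T, ∀ c₂ ∈ T, c₁ ≠ c₂ → 2 * e + 1 ≤ hammingDist c₁ c₂)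
    (hw : ∀ c ∈ T, hammingDist w c ≤ e + 1) (hy : ∀ c ∈ T, hammingDist c y ≤ e + ℓ)
    (hℓ : 1 ≤ ℓ) (hm : ℓ ≤ hammingDist w y) : #T ≤ ℓ * (Fintype.card α - 1) + 1 :=
  hm.eq_or_lt.elim (fun h => card_le_of_hammingDist_eq hT hw hy h.symm)
    (card_le_of_lt_hammingDist hT hw hy hℓ)

end Hamming

theorem stmt12_general (q n e ℓ t : ℕ) (ht : t = e + ℓ) (hl : 1 ≤ ℓ)
    (C : Finset (Fin n → Fin q))
    (hC : ∀ c1 ∈ C, ∀ c2 ∈ C, c1 ≠ c2 → 2 * e + 1 ≤ hammingDist c1 c2)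
    (Y : Finset (Fin n → Fin q))
    (hY : (∑ i ∈ Finset.range ℓ, (q - 1) ^ i * n.choose i) + 1 ≤ Y.card)
    (w : Fin n → Fin q)
    (hw : ∀ c ∈ C.filter (fun c => ∀ y ∈ Y, hammingDist c y ≤ t), hammingDist w c ≤ e + 1) :
    (C.filter (fun c => ∀ y ∈ Y, hammingDist c y ≤ t)).card ≤ ℓ * (q - 1) + 1 := by
  subst ht
  obtain ⟨y, hyY, hwy⟩ := exists_mem_le_hammingDist (Y := Y) w (R := ℓ)
    (by rwa [Fintype.card_fin, Fintype.card_fin])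
  have hT := card_le_of_le_hammingDist
    (fun c₁ h₁ c₂ h₂ => hC c₁ (mem_filter.1 h₁).1 c₂ (mem_filter.1 h₂).1) hw
    (fun c hc => (mem_filter.1 hc).2 y hyY) hl hwy
  rwa [Fintype.card_fin] at hT

/-- Lemma "Keskussana": let `ℓ ≥ 1`, `q ≥ 3`, `t = e + ℓ`, `C` an `e`-error-correcting code and
`Y` a set of at least `V_q(n,ℓ-1)+1` distinct words. If `w` satisfies `d(w,c) ≤ e+1` for every
`c ∈ T(Y) = ∩_{y∈Y} B_t(y) ∩ C`, then `|T(Y)| ≤ ℓ(q-1)+1`. -/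
theorem stmt12 (q n e ℓ t : ℕ) (ht : t = e + ℓ) (hq : 3 ≤ q) (hl : 1 ≤ ℓ)
    (C : Finset (Fin n → Fin q))
    (hC : ∀ c1 ∈ C, ∀ c2 ∈ C, c1 ≠ c2 → 2 * e + 1 ≤ hammingDist c1 c2)
    (Y : Finset (Fin n → Fin q))
    (hY : (∑ i ∈ Finset.range ℓ, (q - 1) ^ i * n.choose i) + 1 ≤ Y.card)
    (w : Fin n → Fin q)
    (hw : ∀ c ∈ C.filter (fun c => ∀ y ∈ Y, hammingDist c y ≤ t), hammingDist w c ≤ e + 1) :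
    (C.filter (fun c => ∀ y ∈ Y, hammingDist c y ≤ t)).card ≤ ℓ * (q - 1) + 1 :=
  stmt12_general q n e ℓ t ht hl C hC Y hY w hw
end

section
/- Lower bound on list size: let t = e + ℓ, n ≥ e(q-1)ℓ + t, and N ≤ V_q(n, ℓ-1) + 1. Then there exists an e-error-correcting code C ⊆ Z_q^n and a set Y of N distinct words such that |∩_{y∈Y} B_t(y) ∩ C| ≥ (q-1)ℓ + 1; hence L ≥ (q-1)ℓ + 1. -/
/-!
The code consists of `(q - 1) ℓ + 1` words `c_k`. Each `c_k` has a block of `e` ones of its own,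
beyond the first `ℓ` coordinates, and (except the last) one nonzero symbol among the first `ℓ`
coordinates, the pairs (position, symbol) being distinct. Two codewords differ on both blocks and
at the symbol of one of them, so the minimum distance is `2e + 1`. Every codeword has weight at
most `e + 1`, so it lies within `t = e + ℓ` of every word of weight at most `ℓ - 1`; and it differs
from the word with ones on the first `ℓ` coordinates only there and on its block. Hence all
codewords lie in the `t`-balls around these `V_q(n, ℓ - 1) + 1` centers.
-/

open Finset

section HammingCounting

variable {ι β : Type*} [Fintype ι] [DecidableEq β]

lemma card_le_hammingDist {x y : ι → β} {s : Finset ι} (h : ∀ i ∈ s, x i ≠ y i) :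
    #s ≤ hammingDist x y :=
  card_le_card fun i hi => by simpa using h i hi

lemma hammingDist_le_card {x y : ι → β} {s : Finset ι} (h : ∀ i ∉ s, x i = y i) :
    hammingDist x y ≤ #s :=
  card_le_card fun i hi => by_contra fun his => (mem_filter.1 hi).2 (h i his)

variable [DecidableEq ι] [Fintype β] [Zero β]

lemma card_filter_support_eq (s : Finset ι) :
    #{x : ι → β | ({i | x i ≠ 0} : Finset ι) = s} = (Fintype.card β - 1) ^ #s := by
  have hpi : ({x : ι → β | ({i | x i ≠ 0} : Finset ι) = s} : Finset _) =
      Fintype.piFinset fun i => if i ∈ s then {0}ᶜ else {0} := by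
    ext x
    simp only [mem_filter, mem_univ, true_and, Fintype.mem_piFinset, Finset.ext_iff]
    refine forall_congr' fun i => ?_
    split_ifs <;> simp_all
  rw [hpi, Fintype.card_piFinset]
  simp [apply_ite card, card_compl]

lemma card_filter_hammingNorm_eq (r : ℕ) :
    #{x : ι → β | hammingNorm x = r} = (Fintype.card ι).choose r * (Fintype.card β - 1) ^ r := by
  rw [card_eq_sum_card_fiberwise (f := fun x : ι → β => ({i | x i ≠ 0} : Finset ι))
    (t := powersetCard r univ) fun x hx => by simpa [mem_powersetCard, hammingNorm] using hx]
  rw [sum_congr rfl fun s hs => ?_, sum_const, card_powersetCard, card_univ, smul_eq_mul]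
  obtain ⟨-, rfl⟩ := mem_powersetCard.1 hs
  rw [← card_filter_support_eq s]
  congr 1
  ext x
  simp only [mem_filter, mem_univ, true_and, and_iff_right_iff_imp]
  rintro rfl
  rfl

lemma card_filter_hammingNorm_le (r : ℕ) :
    #{x : ι → β | hammingNorm x ≤ r} =
      ∑ i ∈ range (r + 1), (Fintype.card β - 1) ^ i * (Fintype.card ι).choose i := by
  rw [card_eq_sum_card_fiberwise (f := hammingNorm) (t := range (r + 1))
    fun x hx => by simpa [Nat.lt_succ_iff] using hx]
  refine sum_congr rfl fun i hi => ?_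
  rw [mul_comm, ← card_filter_hammingNorm_eq, filter_filter]
  congr 1
  ext x
  simp only [mem_filter, mem_univ, true_and, and_iff_right_iff_imp]
  rintro rfl
  simpa [Nat.lt_succ_iff] using hi

end HammingCounting

lemma card_le_hammingDist_of_val_mem {β : Type*} [DecidableEq β] {n : ℕ} {x y : Fin n → β}
    {D : Finset ℕ} (hD : ∀ m ∈ D, m < n) (h : ∀ i : Fin n, (i : ℕ) ∈ D → x i ≠ y i) :
    #D ≤ hammingDist x y := by
  have hsub : D ⊆ ({i | (i : ℕ) ∈ D} : Finset (Fin n)).image Fin.val := fun m hm =>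
    mem_image.2 ⟨⟨m, hD m hm⟩, by simpa using hm, rfl⟩
  exact (card_le_card hsub).trans <| card_image_le.trans <| card_le_hammingDist fun i hi =>
    h i (by simpa using hi)

lemma hammingDist_le_card_of_val_notMem {β : Type*} [DecidableEq β] {n : ℕ} {x y : Fin n → β}
    {D : Finset ℕ} (h : ∀ i : Fin n, (i : ℕ) ∉ D → x i = y i) :
    hammingDist x y ≤ #D := by
  calc hammingDist x y ≤ #({i | (i : ℕ) ∈ D} : Finset (Fin n)) :=
        hammingDist_le_card fun i hi => h i (by simpa using hi)
    _ ≤ #D := card_le_card_of_injOn Fin.val (fun i hi => by simpa using hi) Fin.val_injective.injOn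

lemma Fin.one_ne_zero_of_two_le {q : ℕ} [NeZero q] (hq : 2 ≤ q) : (1 : Fin q) ≠ 0 := by
  simp [Fin.ext_iff, Nat.mod_eq_of_lt hq]

def codeBlock (e ℓ k : ℕ) : Finset ℕ := Ico (ℓ + k * e) (ℓ + (k + 1) * e)

lemma card_codeBlock (e ℓ k : ℕ) : #(codeBlock e ℓ k) = e := by
  simp only [codeBlock, Nat.card_Ico]; ring_nf; omega

lemma le_of_mem_codeBlock {e ℓ k m : ℕ} (h : m ∈ codeBlock e ℓ k) : ℓ ≤ m := by
  simp only [codeBlock, mem_Ico] at h; omega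

lemma disjoint_codeBlock {e ℓ j k : ℕ} (hjk : j < k) :
    Disjoint (codeBlock e ℓ j) (codeBlock e ℓ k) := by
  have : (j + 1) * e ≤ k * e := Nat.mul_le_mul_right e hjk
  simp only [codeBlock, disjoint_left, mem_Ico]
  omega

/-- With `k = h (q - 1) + p`, `0 ≤ p < q - 1`, the word `listCodeword q e ℓ k` is the paper's
`c_{k+1}`: symbol `p + 1` at position `h` (only when `h < ℓ`, i.e. `k < (q - 1) ℓ`) and ones on
`codeBlock e ℓ k`. The word with `k = (q - 1) ℓ` is the paper's codeword of weight `e`.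
Positions are `0`-indexed. -/
def listCodeword (q e ℓ : ℕ) [NeZero q] {n : ℕ} (k : ℕ) (i : Fin n) : Fin q :=
  if (i : ℕ) < ℓ then (if (i : ℕ) = k / (q - 1) then Fin.ofNat q (k % (q - 1) + 1) else 0)
  else if (i : ℕ) ∈ codeBlock e ℓ k then 1 else 0

def initialOnes (q ℓ : ℕ) [NeZero q] {n : ℕ} (i : Fin n) : Fin q := if (i : ℕ) < ℓ then 1 else 0

section ListCodeword

variable {q e ℓ n : ℕ} [NeZero q]

lemma val_listCodeword_of_lt (hq : 2 ≤ q) {k : ℕ} {i : Fin n} (hi : (i : ℕ) < ℓ) :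
    (listCodeword q e ℓ k i : ℕ) = if (i : ℕ) = k / (q - 1) then k % (q - 1) + 1 else 0 := by
  have : k % (q - 1) + 1 < q := by have := Nat.mod_lt k (show 0 < q - 1 by omega); omega
  simp only [listCodeword, if_pos hi]
  split_ifs <;> simp [Nat.mod_eq_of_lt this]

lemma listCodeword_of_le {k : ℕ} {i : Fin n} (hi : ℓ ≤ (i : ℕ)) :
    listCodeword q e ℓ k i = if (i : ℕ) ∈ codeBlock e ℓ k then 1 else 0 := by
  simp only [listCodeword, if_neg (not_lt.2 hi)]

lemma listCodeword_eq_zero {k : ℕ} {i : Fin n}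
    (hi : (i : ℕ) ∉ insert (k / (q - 1)) (codeBlock e ℓ k)) :
    listCodeword q e ℓ k i = 0 := by
  rw [mem_insert, not_or] at hi
  unfold listCodeword
  simp [hi.1, hi.2]

lemma hammingNorm_listCodeword_le (k : ℕ) :
    hammingNorm (listCodeword q e ℓ k : Fin n → Fin q) ≤ e + 1 := by
  rw [← hammingDist_zero_right]
  refine (hammingDist_le_card_of_val_notMem fun i hi => listCodeword_eq_zero hi).trans ?_
  exact (card_insert_le _ _).trans (by rw [card_codeBlock])

lemma hammingDist_listCodeword_initialOnes_le (k : ℕ) :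
    hammingDist (listCodeword q e ℓ k : Fin n → Fin q) (initialOnes q ℓ) ≤ ℓ + e := by
  refine (hammingDist_le_card_of_val_notMem (D := range ℓ ∪ codeBlock e ℓ k)
    fun i hi => ?_).trans ?_
  · rw [mem_union, mem_range, not_or, not_lt] at hi
    simp [listCodeword_of_le hi.1, hi.2, initialOnes, not_lt.2 hi.1]
  · exact (card_union_le _ _).trans (by rw [card_range, card_codeBlock])

lemma le_hammingDist_listCodeword (hq : 2 ≤ q) (hn : ℓ + ((q - 1) * ℓ + 1) * e ≤ n) {j k : ℕ}
    (hjk : j < k) (hk : k ≤ (q - 1) * ℓ) :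
    2 * e + 1 ≤ hammingDist (listCodeword q e ℓ j : Fin n → Fin q) (listCodeword q e ℓ k) := by
  -- They differ on both blocks and at the symbol of `c_j`, where `c_k` is `0` or another symbol.
  have hhead : j / (q - 1) < ℓ := Nat.div_lt_of_lt_mul (by omega)
  have hdisj := disjoint_codeBlock (e := e) (ℓ := ℓ) hjk
  have hcard : #(insert (j / (q - 1)) (codeBlock e ℓ j ∪ codeBlock e ℓ k)) = 2 * e + 1 := by
    rw [card_insert_of_notMem, card_union_of_disjoint hdisj, card_codeBlock, card_codeBlock]
    · ring
    · rw [mem_union]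
      rintro (h | h) <;> exact absurd (le_of_mem_codeBlock h) (not_le.2 hhead)
  rw [← hcard]
  refine card_le_hammingDist_of_val_mem (fun m hm => ?_) fun i hi => ?_
  · have : (k + 1) * e ≤ ((q - 1) * ℓ + 1) * e := Nat.mul_le_mul_right e (by omega)
    have : (j + 1) * e ≤ ((q - 1) * ℓ + 1) * e := Nat.mul_le_mul_right e (by omega)
    simp only [mem_insert, mem_union, codeBlock, mem_Ico] at hm
    omega
  rw [mem_insert, mem_union] at hi
  rcases hi with hi | hi | hi
  · rw [Ne, Fin.ext_iff, val_listCodeword_of_lt hq (hi ▸ hhead),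
      val_listCodeword_of_lt hq (hi ▸ hhead), if_pos hi]
    split_ifs with hk
    · exact fun hmod => hjk.ne (Nat.ext_div_modEq (hi.symm.trans hk) (Nat.add_right_cancel hmod))
    · exact not_false
  · rw [listCodeword_of_le (le_of_mem_codeBlock hi), listCodeword_of_le (le_of_mem_codeBlock hi),
      if_pos hi, if_neg (disjoint_left.1 hdisj hi)]
    exact Fin.one_ne_zero_of_two_le hq
  · rw [listCodeword_of_le (le_of_mem_codeBlock hi), listCodeword_of_le (le_of_mem_codeBlock hi),
      if_pos hi, if_neg (disjoint_right.1 hdisj hi)]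
    exact (Fin.one_ne_zero_of_two_le hq).symm

lemma le_hammingDist_listCodeword_of_ne (hq : 2 ≤ q) (hn : ℓ + ((q - 1) * ℓ + 1) * e ≤ n)
    {j k : ℕ} (hj : j ≤ (q - 1) * ℓ) (hk : k ≤ (q - 1) * ℓ) (hjk : j ≠ k) :
    2 * e + 1 ≤ hammingDist (listCodeword q e ℓ j : Fin n → Fin q) (listCodeword q e ℓ k) := by
  rcases hjk.lt_or_gt with h | h
  · exact le_hammingDist_listCodeword hq hn h hk
  · exact hammingDist_comm (listCodeword q e ℓ j) _ ▸ le_hammingDist_listCodeword hq hn h hj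

lemma hammingNorm_initialOnes (hq : 2 ≤ q) (hln : ℓ ≤ n) :
    hammingNorm (initialOnes q ℓ : Fin n → Fin q) = ℓ := by
  rw [← hammingDist_zero_right]
  refine le_antisymm ?_ ?_
  · refine (hammingDist_le_card_of_val_notMem (D := range ℓ) fun i hi => ?_).trans_eq (card_range ℓ)
    simp [initialOnes, mem_range.not.1 hi]
  · refine (card_range ℓ).symm.trans_le (card_le_hammingDist_of_val_mem
      (fun m hm => (mem_range.1 hm).trans_le hln) fun i hi => ?_)
    simpa [initialOnes, mem_range.1 hi] using Fin.one_ne_zero_of_two_le hq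

end ListCodeword

def listCode (q n e ℓ : ℕ) [NeZero q] : Finset (Fin n → Fin q) :=
  (range ((q - 1) * ℓ + 1)).image (listCodeword q e ℓ)

def listCenters (q n ℓ : ℕ) [NeZero q] : Finset (Fin n → Fin q) :=
  insert (initialOnes q ℓ) ({y | hammingNorm y ≤ ℓ - 1} : Finset (Fin n → Fin q))

section ListCode

variable {q n e ℓ : ℕ} [NeZero q]

lemma listCode_minDist (hq : 2 ≤ q) (hn : ℓ + ((q - 1) * ℓ + 1) * e ≤ n) :
    ∀ c₁ ∈ listCode q n e ℓ, ∀ c₂ ∈ listCode q n e ℓ, c₁ ≠ c₂ → 2 * e + 1 ≤ hammingDist c₁ c₂ := by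
  simp only [listCode, mem_image, mem_range, Nat.lt_succ_iff]
  rintro _ ⟨j, hj, rfl⟩ _ ⟨k, hk, rfl⟩ hne
  exact le_hammingDist_listCodeword_of_ne hq hn hj hk (ne_of_apply_ne _ hne)

lemma card_listCode (hq : 2 ≤ q) (hn : ℓ + ((q - 1) * ℓ + 1) * e ≤ n) :
    #(listCode q n e ℓ) = (q - 1) * ℓ + 1 := by
  rw [listCode, card_image_of_injOn, card_range]
  intro j hj k hk hjk
  by_contra hne
  simp only [coe_range, Set.mem_Iio, Nat.lt_succ_iff] at hj hk
  have := le_hammingDist_listCodeword_of_ne hq hn hj hk hne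
  rw [hjk, hammingDist_self] at this
  omega

lemma card_listCenters (hq : 2 ≤ q) (hl : 1 ≤ ℓ) (hln : ℓ ≤ n) :
    #(listCenters q n ℓ) = (∑ i ∈ range ℓ, (q - 1) ^ i * n.choose i) + 1 := by
  rw [listCenters, card_insert_of_notMem (by simp [hammingNorm_initialOnes hq hln]; omega),
    card_filter_hammingNorm_le, Nat.sub_add_cancel hl, Fintype.card_fin, Fintype.card_fin]

lemma hammingDist_le_of_mem_listCode_of_mem_listCenters (hl : 1 ≤ ℓ) {c y : Fin n → Fin q}
    (hc : c ∈ listCode q n e ℓ) (hy : y ∈ listCenters q n ℓ) : hammingDist c y ≤ e + ℓ := by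
  obtain ⟨k, -, rfl⟩ := mem_image.1 hc
  rcases mem_insert.1 hy with rfl | hy
  · exact (hammingDist_listCodeword_initialOnes_le k).trans_eq (add_comm _ _)
  · calc hammingDist (listCodeword q e ℓ k) y
          ≤ hammingNorm (listCodeword q e ℓ k) + hammingNorm y := by
            simpa using hammingDist_triangle (listCodeword q e ℓ k) 0 y
      _ ≤ e + 1 + (ℓ - 1) := add_le_add (hammingNorm_listCodeword_le k) (mem_filter.1 hy).2
      _ = e + ℓ := by omega

end ListCode

/-- Theorem "ell(q-1) list" (lower bound): with `t = e + ℓ`, `n ≥ e(q-1)ℓ + t` and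
`N ≤ V_q(n,ℓ-1) + 1`, there exist an `e`-error-correcting code `C ⊆ (Z_q)^n` and a set `Y` of
`N` distinct words such that `|∩_{y∈Y} B_t(y) ∩ C| ≥ (q-1)ℓ + 1`; hence `L ≥ (q-1)ℓ + 1`. -/
theorem stmt14 (q n e ℓ t N : ℕ) (ht : t = e + ℓ) (hq : 2 ≤ q) (hl : 1 ≤ ℓ)
    (hn : e * (q - 1) * ℓ + t ≤ n)
    (hN : N ≤ (∑ i ∈ Finset.range ℓ, (q - 1) ^ i * n.choose i) + 1) :
    ∃ C : Finset (Fin n → Fin q),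
      (∀ c1 ∈ C, ∀ c2 ∈ C, c1 ≠ c2 → 2 * e + 1 ≤ hammingDist c1 c2) ∧
      ∃ Y : Finset (Fin n → Fin q), Y.card = N ∧
        (q - 1) * ℓ + 1 ≤ (C.filter (fun c => ∀ y ∈ Y, hammingDist c y ≤ t)).card := by
  subst ht
  have : NeZero q := ⟨by omega⟩
  have hn' : ℓ + ((q - 1) * ℓ + 1) * e ≤ n := by linarith
  obtain ⟨Y, hY, rfl⟩ := exists_subset_card_eq (hN.trans (card_listCenters hq hl (by omega)).ge)
  refine ⟨listCode q n e ℓ, listCode_minDist hq hn', Y, rfl, ?_⟩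
  rw [filter_true_of_mem fun c hc y hy =>
    hammingDist_le_of_mem_listCode_of_mem_listCenters hl hc (hY hy), card_listCode hq hn']
end

section
/- The explicit code in Theorem 'ell(q-1) list' is e-error-correcting: the (q-1)ℓ + 1 words c_1, ..., c_{(q-1)ℓ+1} defined by vsupp(c_i) = {(h+1, p)} ∪ {(j,1) : j ∈ [(i-1)e+ℓ+1, ie+ℓ]} for i = h(q-1)+p (h ∈ [0,ℓ-1], p ∈ [1,q-1]) and vsupp(c_{(q-1)ℓ+1}) = {(j,1) : j ∈ [e(q-1)ℓ+ℓ+1, e(q-1)ℓ+t]}, with n ≥ e(q-1)ℓ + t and t = e + ℓ, have pairwise Hamming distance at least 2e+1. -/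
/-!
Coordinates `ℓ, ℓ+1, …` are cut into consecutive blocks of length `e`, the `i`-th
block carrying the ones of `c_i`, so two distinct codewords differ on both of their blocks.
The first `ℓ` coordinates hold the marker `(h+1, p)` of `c_i`, which determines `i`; hence the
codeword with the smaller index differs from the other one also at its marker position,
giving `e + e + 1` differing coordinates.
-/

open Finset

open Fin.NatCast in
/-- The codewords of Theorem "ell(q-1) list" (paper indexing `i ∈ [1,(q-1)ℓ+1]`, coordinates
1-indexed in the paper, 0-indexed here). For `i = h(q-1)+p ≤ (q-1)ℓ` (with `h ∈ [0,ℓ-1]`,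
`p ∈ [1,q-1]`), `vsupp(c_i) = {(h+1,p)} ∪ {(j,1) : j ∈ [(i-1)e+ℓ+1, ie+ℓ]}`; for
`i = (q-1)ℓ+1`, `vsupp(c_i) = {(j,1) : j ∈ [e(q-1)ℓ+ℓ+1, e(q-1)ℓ+e+ℓ]}`. -/
def cwB (q e ℓ n : ℕ) [NeZero q] (i : ℕ) : Fin n → Fin q := fun j =>
  if i ≤ (q - 1) * ℓ then
    if j.val = (i - 1) / (q - 1) then (((i - 1) % (q - 1) + 1 : ℕ) : Fin q)
    else if (i - 1) * e + ℓ ≤ j.val ∧ j.val < i * e + ℓ then 1 else 0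
  else
    if e * (q - 1) * ℓ + ℓ ≤ j.val ∧ j.val < e * (q - 1) * ℓ + e + ℓ then 1 else 0

theorem card_le_hammingDist_s15 {β : Type*} [DecidableEq β] {n : ℕ} {x y : Fin n → β}
    {s : Finset ℕ} (hs : ∀ k ∈ s, ∃ hk : k < n, x ⟨k, hk⟩ ≠ y ⟨k, hk⟩) :
    #s ≤ hammingDist x y := by
  have hsub : s ⊆ (univ.filter fun j => x j ≠ y j).image Fin.val := by
    intro k hk
    obtain ⟨hkn, hne⟩ := hs k hk
    exact mem_image.mpr ⟨⟨k, hkn⟩, mem_filter.mpr ⟨mem_univ _, hne⟩, rfl⟩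
  exact (card_le_card hsub).trans card_image_le

/-- The coordinates carrying the ones of the `i`-th codeword. -/
def cwBlock (e ℓ i : ℕ) : Finset ℕ := Ico ((i - 1) * e + ℓ) (i * e + ℓ)

theorem card_cwBlock (e ℓ : ℕ) {i : ℕ} (hi : 1 ≤ i) : #(cwBlock e ℓ i) = e := by
  obtain ⟨i, rfl⟩ := Nat.exists_eq_add_of_le' hi
  simp only [cwBlock, Nat.card_Ico, Nat.add_sub_cancel, Nat.add_mul, one_mul]
  omega

theorem disjoint_cwBlock (e ℓ : ℕ) {i₁ i₂ : ℕ} (h : i₁ < i₂) :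
    Disjoint (cwBlock e ℓ i₁) (cwBlock e ℓ i₂) := by
  have : i₁ * e ≤ (i₂ - 1) * e := Nat.mul_le_mul_right e (by omega)
  rw [cwBlock, cwBlock, disjoint_left]
  intro k hk₁ hk₂
  simp only [mem_Ico] at hk₁ hk₂
  omega

theorem sub_one_div_lt {a ℓ i : ℕ} (hi : 1 ≤ i) (hiℓ : i ≤ a * ℓ) : (i - 1) / a < ℓ := by
  have ha : 0 < a := Nat.pos_of_ne_zero (by rintro rfl; omega)
  rw [Nat.div_lt_iff_lt_mul ha, Nat.mul_comm]
  omega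

section cwB

open Fin.NatCast

variable {q e ℓ n : ℕ} [NeZero q]

theorem cwB_apply_of_le_val {i : ℕ} (hi : 1 ≤ i) (hiq : i ≤ (q - 1) * ℓ + 1) {j : Fin n}
    (hj : ℓ ≤ j.val) : cwB q e ℓ n i j = if j.val ∈ cwBlock e ℓ i then 1 else 0 := by
  rcases Nat.lt_or_ge ((q - 1) * ℓ) i with hlast | hi'
  · obtain rfl : i = (q - 1) * ℓ + 1 := by omega
    have hstart : ((q - 1) * ℓ + 1 - 1) * e = e * (q - 1) * ℓ := by
      rw [Nat.add_sub_cancel]; ring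
    have hend : ((q - 1) * ℓ + 1) * e = e * (q - 1) * ℓ + e := by ring
    simp only [cwB, cwBlock, mem_Ico, hstart, hend, if_neg (Nat.not_le_of_lt hlast),
      Nat.add_right_comm _ e ℓ]
  · have := sub_one_div_lt hi hi'
    simp only [cwB, cwBlock, mem_Ico, if_pos hi', if_neg (show j.val ≠ (i - 1) / (q - 1) by omega)]

theorem cwB_apply_of_val_lt {i : ℕ} {j : Fin n} (hj : j.val < ℓ) :
    cwB q e ℓ n i j = if i ≤ (q - 1) * ℓ ∧ j.val = (i - 1) / (q - 1)
      then (((i - 1) % (q - 1) + 1 : ℕ) : Fin q) else 0 := by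
  unfold cwB
  split_ifs <;> first | rfl | omega

theorem val_natCast_mod_add_one (hq : 1 < q) (r : ℕ) :
    (((r % (q - 1) + 1 : ℕ) : Fin q)).val = r % (q - 1) + 1 := by
  have := Nat.mod_lt r (show 0 < q - 1 by omega)
  rw [Fin.val_natCast, Nat.mod_eq_of_lt (by omega)]

/-- At the marker position of `c_{i₁}`, the codeword `c_{i₂}` either has no marker or a
different one, because `i - 1 ↦ ((i - 1) / (q - 1), (i - 1) % (q - 1))` is injective. -/
theorem cwB_ne_at_marker {i₁ i₂ : ℕ} (hi₁ : 1 ≤ i₁) (h : i₁ < i₂) (hi₂ : i₂ ≤ (q - 1) * ℓ + 1)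
    {j : Fin n} (hj : j.val = (i₁ - 1) / (q - 1)) : cwB q e ℓ n i₁ j ≠ cwB q e ℓ n i₂ j := by
  have hi₁q : i₁ ≤ (q - 1) * ℓ := by omega
  have hq : 1 < q := by
    by_contra! hq
    rw [Nat.sub_eq_zero_of_le hq, zero_mul] at hi₁q
    omega
  have hjℓ : j.val < ℓ := hj ▸ sub_one_div_lt hi₁ hi₁q
  rw [cwB_apply_of_val_lt hjℓ, cwB_apply_of_val_lt hjℓ, if_pos ⟨hi₁q, hj⟩]
  intro heq
  split_ifs at heq with hmarker
  · have hval := congrArg Fin.val heq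
    rw [val_natCast_mod_add_one hq, val_natCast_mod_add_one hq] at hval
    have hdiv : (i₁ - 1) / (q - 1) = (i₂ - 1) / (q - 1) := hj ▸ hmarker.2
    have h₁ := Nat.div_add_mod (i₁ - 1) (q - 1)
    have h₂ := Nat.div_add_mod (i₂ - 1) (q - 1)
    rw [hdiv] at h₁
    omega
  · have hval := congrArg Fin.val heq
    rw [val_natCast_mod_add_one hq, Fin.val_zero] at hval
    omega

theorem cwB_ne_on_cwBlock {i₁ i₂ : ℕ} (hi₁ : 1 ≤ i₁) (h : i₁ < i₂) (hi₂ : i₂ ≤ (q - 1) * ℓ + 1)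
    {j : Fin n} (hj : j.val ∈ cwBlock e ℓ i₁ ∪ cwBlock e ℓ i₂) :
    cwB q e ℓ n i₁ j ≠ cwB q e ℓ n i₂ j := by
  have hq : q ≠ 1 := by
    rintro rfl
    omega
  have hjℓ : ℓ ≤ j.val := by
    simp only [cwBlock, mem_union, mem_Ico] at hj
    omega
  rw [cwB_apply_of_le_val hi₁ (by omega) hjℓ, cwB_apply_of_le_val (by omega) hi₂ hjℓ]
  rcases mem_union.mp hj with hj₁ | hj₂
  · simp [hq, hj₁, disjoint_left.mp (disjoint_cwBlock e ℓ h) hj₁]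
  · simp [hq, hj₂, disjoint_right.mp (disjoint_cwBlock e ℓ h) hj₂]

theorem le_hammingDist_cwB {i₁ i₂ : ℕ} (hi₁ : 1 ≤ i₁) (h : i₁ < i₂)
    (hi₂ : i₂ ≤ (q - 1) * ℓ + 1) (hn : e * (q - 1) * ℓ + (e + ℓ) ≤ n) :
    2 * e + 1 ≤ hammingDist (cwB q e ℓ n i₁) (cwB q e ℓ n i₂) := by
  set m := (i₁ - 1) / (q - 1)
  have hmℓ : m < ℓ := sub_one_div_lt hi₁ (by omega)
  have hm : m ∉ cwBlock e ℓ i₁ ∪ cwBlock e ℓ i₂ := by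
    simp only [cwBlock, mem_union, mem_Ico]
    omega
  have hcard : #(insert m (cwBlock e ℓ i₁ ∪ cwBlock e ℓ i₂)) = 2 * e + 1 := by
    rw [card_insert_of_notMem hm, card_union_of_disjoint (disjoint_cwBlock e ℓ h),
      card_cwBlock e ℓ hi₁, card_cwBlock e ℓ (by omega)]
    ring
  have hlt : ∀ k ∈ cwBlock e ℓ i₁ ∪ cwBlock e ℓ i₂, k < n := by
    have : i₂ * e + ℓ ≤ n := calc
      i₂ * e + ℓ ≤ ((q - 1) * ℓ + 1) * e + ℓ := by gcongr
      _ = e * (q - 1) * ℓ + (e + ℓ) := by ring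
      _ ≤ n := hn
    have : i₁ * e ≤ i₂ * e := Nat.mul_le_mul_right e h.le
    simp only [cwBlock, mem_union, mem_Ico]
    omega
  rw [← hcard]
  refine card_le_hammingDist_s15 fun k hk => ?_
  rcases mem_insert.mp hk with rfl | hk
  · exact ⟨by omega, cwB_ne_at_marker hi₁ h hi₂ rfl⟩
  · exact ⟨hlt k hk, cwB_ne_on_cwBlock hi₁ h hi₂ hk⟩

end cwB

theorem stmt15_general (q n e ℓ t : ℕ) [NeZero q] (ht : t = e + ℓ)
    (hn : e * (q - 1) * ℓ + t ≤ n) :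
    ∀ i1, 1 ≤ i1 → i1 ≤ (q - 1) * ℓ + 1 → ∀ i2, 1 ≤ i2 → i2 ≤ (q - 1) * ℓ + 1 → i1 ≠ i2 →
      2 * e + 1 ≤ hammingDist (cwB q e ℓ n i1) (cwB q e ℓ n i2) := by
  subst ht
  intro i1 h1 h1' i2 h2 h2' hne
  rcases Nat.lt_or_gt_of_ne hne with h | h
  · exact le_hammingDist_cwB h1 h h2' hn
  · rw [hammingDist_comm]
    exact le_hammingDist_cwB h2 h h1' hn

/-- The explicit code of Theorem "ell(q-1) list" is `e`-error-correcting: its `(q-1)ℓ+1`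
codewords have pairwise Hamming distance at least `2e+1`. -/
theorem stmt15 (q n e ℓ t : ℕ) [NeZero q] (hq : 3 ≤ q) (hl : 1 ≤ ℓ) (ht : t = e + ℓ)
    (hn : e * (q - 1) * ℓ + t ≤ n) :
    ∀ i1, 1 ≤ i1 → i1 ≤ (q - 1) * ℓ + 1 → ∀ i2, 1 ≤ i2 → i2 ≤ (q - 1) * ℓ + 1 → i1 ≠ i2 →
      2 * e + 1 ≤ hammingDist (cwB q e ℓ n i1) (cwB q e ℓ n i2) :=
  stmt15_general q n e ℓ t ht hn
end

section
/- Asymptotic comparison used in Lemma 'LemAlg?': for fixed e ≥ 1, ℓ ≥ 1, q ≥ 3 and sufficiently large n, C(n-2e-1, ℓ-1)·(q-1)^{ℓ-1}·C(2e+1, e)·((e+1)(q-2) + 2) ≥ (e+2)·V_q(n-e-1, ℓ-1), where V_q(m,r) = Σ_{i=0}^{r} (q-1)^i C(m,i). -/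
/-! Write `a = q - 1 ≥ 2`, `k = ℓ - 1` and `m = n - 2e - 1`. For `m ≥ 2k` the terms
`aⁱ·C(m+e, i)`, `i ≤ k`, grow at least geometrically with ratio `a ≥ 2`, so the whole sum is at
most twice its last term, and `C(m+e, k) ≤ 2ᵉ·C(m, k)` since each of the `e` extra rows at most
doubles a binomial coefficient left of the middle. This reduces the claim to the constant
inequality `2(e+2)·2ᵉ ≤ C(2e+1, e)·(e+3) ≤ C(2e+1, e)·((e+1)(q-2)+2)`, which follows from
`(e+2)·2ᵉ ≤ centralBinom (e+1) = 2·C(2e+1, e)`. -/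

open Finset

namespace Nat

theorem choose_succ_le_two_mul_choose {m k : ℕ} (h : 2 * k ≤ m) :
    (m + 1).choose k ≤ 2 * m.choose k := by
  cases k with
  | zero => simp
  | succ k =>
    have : m.choose k ≤ m.choose (k + 1) := choose_le_succ_of_lt_half_left (by omega)
    rw [choose_succ_succ']
    omega

theorem choose_add_le_two_pow_mul_choose {m k : ℕ} (h : 2 * k ≤ m) (e : ℕ) :
    (m + e).choose k ≤ 2 ^ e * m.choose k := by
  induction e with
  | zero => simp
  | succ e ih =>
    calc (m + (e + 1)).choose k = (m + e + 1).choose k := by rw [add_assoc]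
      _ ≤ 2 * (m + e).choose k := choose_succ_le_two_mul_choose (by omega)
      _ ≤ 2 ^ (e + 1) * m.choose k := by
          rw [pow_succ', mul_assoc]
          gcongr

theorem sum_range_succ_pow_mul_choose_le {a M k : ℕ} (ha : 2 ≤ a) (h : 2 * k ≤ M) :
    ∑ i ∈ range (k + 1), a ^ i * M.choose i ≤ 2 * (a ^ k * M.choose k) := by
  induction k with
  | zero => simp
  | succ k ih =>
    have hstep : 2 * (a ^ k * M.choose k) ≤ a ^ (k + 1) * M.choose (k + 1) := by
      rw [pow_succ', mul_assoc]
      exact Nat.mul_le_mul ha (Nat.mul_le_mul_left _ (choose_le_succ_of_lt_half_left (by omega)))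
    have := ih (by omega)
    rw [sum_range_succ]
    omega

theorem centralBinom_succ_eq_two_mul_choose (n : ℕ) :
    centralBinom (n + 1) = 2 * (2 * n + 1).choose n := by
  rw [centralBinom_eq_two_mul_choose, show 2 * (n + 1) = 2 * n + 1 + 1 by ring,
    choose_succ_succ, choose_symm_half]
  ring

theorem add_two_mul_two_pow_le_centralBinom_succ (n : ℕ) :
    (n + 2) * 2 ^ n ≤ centralBinom (n + 1) := by
  induction n with
  | zero => decide
  | succ n ih =>
    refine Nat.le_of_mul_le_mul_left ?_ (show 0 < n + 2 by omega)
    calc (n + 2) * ((n + 3) * 2 ^ (n + 1)) = 2 * (n + 3) * ((n + 2) * 2 ^ n) := by ring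
      _ ≤ 2 * (2 * (n + 1) + 1) * centralBinom (n + 1) := Nat.mul_le_mul (by omega) ih
      _ = (n + 1 + 1) * centralBinom (n + 1 + 1) := (succ_mul_centralBinom_succ (n + 1)).symm

theorem two_mul_add_two_mul_two_pow_le_choose_mul {e : ℕ} (he : 1 ≤ e) :
    2 * (e + 2) * 2 ^ e ≤ (2 * e + 1).choose e * (e + 3) := by
  have hc := add_two_mul_two_pow_le_centralBinom_succ e
  rw [centralBinom_succ_eq_two_mul_choose] at hc
  refine Nat.le_of_mul_le_mul_left ?_ (show 0 < 2 by omega)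
  calc 2 * (2 * (e + 2) * 2 ^ e) = 4 * ((e + 2) * 2 ^ e) := by ring
    _ ≤ (e + 3) * (2 * (2 * e + 1).choose e) := by gcongr; omega
    _ = 2 * ((2 * e + 1).choose e * (e + 3)) := by ring

end Nat

open Nat in
theorem stmt17_general (e ℓ q : ℕ) (he : 1 ≤ e) (hq : 3 ≤ q) :
    ∃ n0 : ℕ, ∀ n ≥ n0,
      (e + 2) * ∑ i ∈ Finset.range ℓ, (q - 1) ^ i * (n - e - 1).choose i
        ≤ (n - 2 * e - 1).choose (ℓ - 1) * (q - 1) ^ (ℓ - 1) * (2 * e + 1).choose e *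
            ((e + 1) * (q - 2) + 2) := by
  rcases ℓ with _ | k
  · exact ⟨0, fun n _ => by simp⟩
  refine ⟨2 * e + 2 * k + 1, fun n hn => ?_⟩
  obtain ⟨m, rfl⟩ : ∃ m, n = m + 2 * e + 1 := ⟨n - 2 * e - 1, by omega⟩
  rw [add_tsub_cancel_right, show m + 2 * e + 1 - e - 1 = m + e by omega,
    show m + 2 * e + 1 - 2 * e - 1 = m by omega]
  have hq' : e + 3 ≤ (e + 1) * (q - 2) + 2 := by
    have : e + 1 ≤ (e + 1) * (q - 2) := Nat.le_mul_of_pos_right _ (by omega)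
    omega
  calc (e + 2) * ∑ i ∈ range (k + 1), (q - 1) ^ i * (m + e).choose i
      ≤ (e + 2) * (2 * ((q - 1) ^ k * (m + e).choose k)) := by
        gcongr
        exact sum_range_succ_pow_mul_choose_le (by omega) (by omega)
    _ ≤ (e + 2) * (2 * ((q - 1) ^ k * (2 ^ e * m.choose k))) := by
        gcongr
        exact choose_add_le_two_pow_mul_choose (by omega) e
    _ = 2 * (e + 2) * 2 ^ e * (m.choose k * (q - 1) ^ k) := by ring
    _ ≤ (2 * e + 1).choose e * (e + 3) * (m.choose k * (q - 1) ^ k) := by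
        exact Nat.mul_le_mul_right _ (two_mul_add_two_mul_two_pow_le_choose_mul he)
    _ ≤ m.choose k * (q - 1) ^ k * (2 * e + 1).choose e * ((e + 1) * (q - 2) + 2) := by
        rw [mul_comm, ← mul_assoc]
        gcongr

/-- Asymptotic comparison of Lemma "LemAlg?": for fixed `e ≥ 1`, `ℓ ≥ 1`, `q ≥ 3` and all
sufficiently large `n`,
`C(n-2e-1,ℓ-1)·(q-1)^{ℓ-1}·C(2e+1,e)·((e+1)(q-2)+2) ≥ (e+2)·V_q(n-e-1,ℓ-1)`. -/
theorem stmt17 (e ℓ q : ℕ) (he : 1 ≤ e) (hl : 1 ≤ ℓ) (hq : 3 ≤ q) :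
    ∃ n0 : ℕ, ∀ n ≥ n0,
      (e + 2) * ∑ i ∈ Finset.range ℓ, (q - 1) ^ i * (n - e - 1).choose i
        ≤ (n - 2 * e - 1).choose (ℓ - 1) * (q - 1) ^ (ℓ - 1) * (2 * e + 1).choose e *
            ((e + 1) * (q - 2) + 2) :=
  stmt17_general e ℓ q he hq
end
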